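/- arXiv:1310.0247 — 7 statements merged into one kernel-verified Lean document; each statement's English description precedes it below -/
import Mathlib

section
/- Let 0 < α ≤ 1. The following are equivalent: (i) ∑_{n=0}^∞ |P_n(0)|^{2α} < ∞ and ∑_{n=0}^∞ |Q_n(0)|^{2α} < ∞; (ii) for every z ∈ ℂ, ∑_{n=0}^∞ |P_n(z)|^{2α} < ∞ and ∑_{n=0}^∞ |Q_n(z)|^{2α} < ∞. Moreover, if these conditions hold, then the moment problem is indeterminate, ∑_{n=0}^∞ b_n^{-α} < ∞, and for every z ∈ ℂ one has (∑_{n=0}^∞ |P_n(z)|²)^{1/2} ≤ C·exp(K|z|^α), where C = (∑_{n=0}^∞ (P_n(0)² + Q_n(0)²))^{1/2} and K = (1/α)·∑_{n=0}^∞ (|P_n(0)|^{2α} + |Q_n(0)|^{2α}). -/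
/-!
Writing `D(n, k) = Q_n(0) P_k(0) - P_n(0) Q_k(0)`, variation of constants gives
`P_n(z) = P_n(0) + z ∑_{k<n} D(n, k) P_k(z)`, and likewise for `Q`, since the Wronskian
`b_n D(n+1, n)` is constantly `1`. With `c_n = (|P_n(0)|² + |Q_n(0)|²)^{1/2}` Cauchy–Schwarz gives
`|D(n, k)| ≤ c_n c_k`, and a discrete Gronwall argument gives
`|P_n(z)|, |Q_n(z)| ≤ c_n ∏_{k<n} (1 + |z| c_k²)`. The elementary bound `1 + u ≤ exp (u^α / α)`
together with `c_k^{2α} ≤ |P_k(0)|^{2α} + |Q_k(0)|^{2α}` bounds the product by `exp (K |z|^α)`.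
Finally `1 / b_n = |D(n+1, n)| ≤ c_{n+1} c_n`, which is `ℓ^α`-summable by AM–GM.
-/

open Finset

theorem Real.rpow_two_mul {x : ℝ} (hx : 0 ≤ x) (y : ℝ) : x ^ (2 * y) = (x ^ 2) ^ y := by
  exact_mod_cast Real.rpow_natCast_mul hx 2 y

theorem sqrt_sq_add_sq_rpow_two_mul_le {x y α : ℝ} (hx : 0 ≤ x) (hy : 0 ≤ y) (hα0 : 0 ≤ α)
    (hα1 : α ≤ 1) : √(x ^ 2 + y ^ 2) ^ (2 * α) ≤ x ^ (2 * α) + y ^ (2 * α) := by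
  rw [Real.rpow_two_mul (Real.sqrt_nonneg _), Real.sq_sqrt (by positivity), Real.rpow_two_mul hx,
    Real.rpow_two_mul hy]
  exact Real.rpow_add_le_add_rpow (sq_nonneg x) (sq_nonneg y) hα0 hα1

theorem norm_mul_sub_mul_le {R : Type*} [SeminormedRing R] (x y x' y' : R) :
    ‖y * x' - x * y'‖ ≤ √(‖x‖ ^ 2 + ‖y‖ ^ 2) * √(‖x'‖ ^ 2 + ‖y'‖ ^ 2) :=
  calc ‖y * x' - x * y'‖ ≤ ‖y‖ * ‖x'‖ + ‖x‖ * ‖y'‖ :=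
        (norm_sub_le _ _).trans (add_le_add (norm_mul_le _ _) (norm_mul_le _ _))
    _ ≤ √((‖x‖ ^ 2 + ‖y‖ ^ 2) * (‖x'‖ ^ 2 + ‖y'‖ ^ 2)) :=
        Real.le_sqrt_of_sq_le <| by nlinarith [sq_nonneg (‖x‖ * ‖x'‖ - ‖y‖ * ‖y'‖)]
    _ = _ := Real.sqrt_mul (by positivity) _

theorem one_add_le_exp_rpow_div {u α : ℝ} (hu : 0 ≤ u) (hα0 : 0 < α) (hα1 : α ≤ 1) :
    1 + u ≤ Real.exp (u ^ α / α) := by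
  have hsuper : 1 + u ≤ (1 + u ^ α) ^ (1 / α) := by
    have := Real.add_rpow_le_rpow_add zero_le_one (Real.rpow_nonneg hu α)
      (one_le_one_div hα0 hα1)
    rwa [Real.one_rpow, ← Real.rpow_mul hu, mul_one_div_cancel hα0.ne', Real.rpow_one] at this
  calc 1 + u ≤ (1 + u ^ α) ^ (1 / α) := hsuper
    _ ≤ Real.exp (u ^ α) ^ (1 / α) := by
      gcongr
      linarith [Real.add_one_le_exp (u ^ α)]
    _ = Real.exp (u ^ α / α) := by rw [← Real.exp_mul, mul_one_div]

theorem prod_one_add_le_exp_sum_rpow_div {ι : Type*} {s : Finset ι} {u : ι → ℝ} {α : ℝ}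
    (hu : ∀ i ∈ s, 0 ≤ u i) (hα0 : 0 < α) (hα1 : α ≤ 1) :
    ∏ i ∈ s, (1 + u i) ≤ Real.exp ((∑ i ∈ s, u i ^ α) / α) := by
  rw [sum_div, Real.exp_sum]
  exact prod_le_prod (fun i hi => by linarith [hu i hi])
    fun i hi => one_add_le_exp_rpow_div (hu i hi) hα0 hα1

theorem one_add_mul_sum_mul_prod_eq_prod (t : ℝ) (c : ℕ → ℝ) (n : ℕ) :
    1 + t * ∑ k ∈ range n, c k * ∏ j ∈ range k, (1 + t * c j) =
      ∏ k ∈ range n, (1 + t * c k) := by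
  induction n with
  | zero => simp
  | succ n ih => rw [sum_range_succ, prod_range_succ, ← ih]; ring

theorem le_mul_prod_one_add_of_le_add_sum {x c : ℕ → ℝ} {t : ℝ} (ht : 0 ≤ t)
    (hc : ∀ n, 0 ≤ c n) (hx : ∀ n, x n ≤ c n + t * ∑ k ∈ range n, c n * c k * x k) (n : ℕ) :
    x n ≤ c n * ∏ k ∈ range n, (1 + t * c k ^ 2) := by
  induction n using Nat.strong_induction_on with
  | _ n ih =>
    calc x n ≤ c n + t * ∑ k ∈ range n, c n * c k * (c k * ∏ j ∈ range k, (1 + t * c j ^ 2)) := by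
          refine (hx n).trans ?_
          gcongr with k hk
          · exact mul_nonneg (hc n) (hc k)
          · exact ih k (mem_range.1 hk)
      _ = c n * (1 + t * ∑ k ∈ range n, c k ^ 2 * ∏ j ∈ range k, (1 + t * c j ^ 2)) := by
          simp_rw [mul_add, mul_sum]; ring_nf
      _ = c n * ∏ k ∈ range n, (1 + t * c k ^ 2) := by
          rw [one_add_mul_sum_mul_prod_eq_prod t (c · ^ 2)]

theorem norm_le_mul_exp_of_eq_add_sum {R : Type*} [SeminormedRing R]
    {v w : ℕ → R} {D : ℕ → ℕ → R} {c : ℕ → ℝ} {z : R} {α S : ℝ}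
    (hα0 : 0 < α) (hα1 : α ≤ 1) (hc : ∀ n, 0 ≤ c n) (hw : ∀ n, ‖w n‖ ≤ c n)
    (hD : ∀ n k, ‖D n k‖ ≤ c n * c k) (hS : ∀ n, ∑ k ∈ range n, c k ^ (2 * α) ≤ S)
    (hv : ∀ n, v n = w n + z * ∑ k ∈ range n, D n k * v k) (n : ℕ) :
    ‖v n‖ ≤ c n * Real.exp (1 / α * S * ‖z‖ ^ α) := by
  have hrec : ∀ n, ‖v n‖ ≤ c n + ‖z‖ * ∑ k ∈ range n, c n * c k * ‖v k‖ := fun n => by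
    calc ‖v n‖ ≤ ‖w n‖ + ‖z‖ * ∑ k ∈ range n, ‖D n k‖ * ‖v k‖ := by
          rw [hv n]
          refine (norm_add_le _ _).trans (add_le_add le_rfl ?_)
          refine (norm_mul_le _ _).trans (mul_le_mul_of_nonneg_left ?_ (norm_nonneg z))
          exact (norm_sum_le _ _).trans (sum_le_sum fun k _ => norm_mul_le _ _)
      _ ≤ _ := by gcongr with k; exacts [hw n, hD n k]
  refine (le_mul_prod_one_add_of_le_add_sum (norm_nonneg z) hc hrec n).trans ?_
  gcongr
  · exact hc n
  calc ∏ k ∈ range n, (1 + ‖z‖ * c k ^ 2)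
      ≤ Real.exp ((∑ k ∈ range n, (‖z‖ * c k ^ 2) ^ α) / α) :=
        prod_one_add_le_exp_sum_rpow_div (fun k _ => by positivity) hα0 hα1
    _ = Real.exp (1 / α * (∑ k ∈ range n, c k ^ (2 * α)) * ‖z‖ ^ α) := by
        simp_rw [Real.mul_rpow (norm_nonneg z) (sq_nonneg _), ← mul_sum,
          Real.rpow_two_mul (hc _)]
        ring_nf
    _ ≤ Real.exp (1 / α * S * ‖z‖ ^ α) := by gcongr; exact hS n

theorem summable_norm_rpow_of_le {V : Type*} [NormedAddCommGroup V] {u : ℕ → V} {p q : ℝ}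
    (hp : 0 < p) (hpq : p ≤ q) (hu : Summable fun n => ‖u n‖ ^ p) :
    Summable fun n => ‖u n‖ ^ q := by
  have hq : 0 < q := hp.trans_le hpq
  have h := (memℓp_gen (p := ENNReal.ofReal p) (f := u) (by simpa [hp.le] using hu)).of_exponent_ge
    (ENNReal.ofReal_le_ofReal hpq)
  simpa [hq.le] using h.summable (by simpa [hq.le] using hq)

theorem summable_norm_rpow_of_norm_le_mul {V : Type*} [SeminormedAddCommGroup V] {u : ℕ → V}
    {c : ℕ → ℝ} {E p : ℝ} (hp : 0 ≤ p) (hc : ∀ n, 0 ≤ c n) (hE : 0 ≤ E)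
    (hu : ∀ n, ‖u n‖ ≤ c n * E) (hs : Summable fun n => c n ^ p) :
    Summable fun n => ‖u n‖ ^ p :=
  (hs.mul_right (E ^ p)).of_nonneg_of_le (fun n => by positivity) fun n =>
    (Real.rpow_le_rpow (norm_nonneg _) (hu n) hp).trans_eq (Real.mul_rpow (hc n) hE)

theorem sqrt_tsum_norm_sq_le {V : Type*} [SeminormedAddCommGroup V] {u : ℕ → V}
    {s : ℕ → ℝ} {E : ℝ} (hE : 0 ≤ E) (hs0 : ∀ n, 0 ≤ s n) (hu : ∀ n, ‖u n‖ ≤ √(s n) * E)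
    (hs : Summable s) :
    √(∑' n, ‖u n‖ ^ 2) ≤ √(∑' n, s n) * E := by
  have hsq : ∀ n, ‖u n‖ ^ 2 ≤ E ^ 2 * s n := fun n => by
    rw [← Real.sq_sqrt (hs0 n), ← mul_pow, mul_comm]
    exact pow_le_pow_left₀ (norm_nonneg _) (hu n) 2
  calc √(∑' n, ‖u n‖ ^ 2) ≤ √(∑' n, E ^ 2 * s n) :=
        Real.sqrt_le_sqrt <| Summable.tsum_le_tsum hsq
          ((hs.mul_left _).of_nonneg_of_le (fun n => sq_nonneg _) hsq) (hs.mul_left _)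
    _ = √(∑' n, s n) * E := by
        rw [tsum_mul_left, Real.sqrt_mul (sq_nonneg E), Real.sqrt_sq hE, mul_comm]

theorem summable_rpow_of_le_mul_succ {r c : ℕ → ℝ} {α : ℝ} (hα : 0 ≤ α) (hr : ∀ n, 0 ≤ r n)
    (hc : ∀ n, 0 ≤ c n) (h : ∀ n, r n ≤ c (n + 1) * c n)
    (hs : Summable fun n => c n ^ (2 * α)) : Summable fun n => r n ^ α := by
  refine ((((summable_nat_add_iff 1).2 hs).add hs).div_const 2).of_nonneg_of_le
    (fun n => Real.rpow_nonneg (hr n) α) fun n => ?_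
  have hsq : ∀ m, c m ^ (2 * α) = (c m ^ α) ^ 2 := fun m => by
    rw [mul_comm, ← Real.rpow_mul_natCast (hc m)]; norm_num
  calc r n ^ α ≤ (c (n + 1) * c n) ^ α := Real.rpow_le_rpow (hr n) (h n) hα
    _ = c (n + 1) ^ α * c n ^ α := Real.mul_rpow (hc _) (hc _)
    _ ≤ (c (n + 1) ^ (2 * α) + c n ^ (2 * α)) / 2 := by
        rw [hsq, hsq]; linarith [two_mul_le_add_sq (c (n + 1) ^ α) (c n ^ α)]

/-- Only the rows `n + 1 ≥ 1` of the recurrence: row `0` carries the initial conditions and is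
imposed separately. -/
def IsJacobiSolution (a b : ℕ → ℝ) (z : ℂ) (v : ℕ → ℂ) : Prop :=
  ∀ n, z * v (n + 1) = b (n + 1) * v (n + 2) + a (n + 1) * v (n + 1) + b n * v n

def jacobiKernel (φ ψ : ℕ → ℂ) (n k : ℕ) : ℂ := ψ n * φ k - φ n * ψ k

namespace IsJacobiSolution

variable {a b : ℕ → ℝ} {z : ℂ} {φ ψ v w : ℕ → ℂ}

theorem eq_zero (hb : ∀ n, b n ≠ 0) (hv : IsJacobiSolution a b z v) (h0 : v 0 = 0)
    (h1 : v 1 = 0) : v = 0 := by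
  have key : ∀ n, v n = 0 ∧ v (n + 1) = 0 := by
    intro n
    induction n with
    | zero => exact ⟨h0, h1⟩
    | succ n ih =>
      refine ⟨ih.2, ?_⟩
      have := hv n
      rw [ih.1, ih.2] at this
      simpa [hb (n + 1)] using this.symm
  exact funext fun n => (key n).1

theorem jacobiKernel_left (hφ : IsJacobiSolution a b z φ) (hψ : IsJacobiSolution a b z ψ)
    (k : ℕ) : IsJacobiSolution a b z (jacobiKernel φ ψ · k) := fun n => by
  simp only [jacobiKernel]
  linear_combination φ k * hψ n - ψ k * hφ n

theorem mul_jacobiKernel_succ_self (hφ : IsJacobiSolution a b z φ)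
    (hψ : IsJacobiSolution a b z ψ) (n : ℕ) :
    b n * jacobiKernel φ ψ (n + 1) n = b 0 * jacobiKernel φ ψ 1 0 := by
  induction n with
  | zero => rfl
  | succ n ih =>
    simp only [jacobiKernel] at ih ⊢
    linear_combination ψ (n + 1) * hφ n - φ (n + 1) * hψ n + ih

theorem sum_jacobiKernel (hφ : IsJacobiSolution a b 0 φ) (hψ : IsJacobiSolution a b 0 ψ)
    (hW : ∀ n, (b n : ℂ) * jacobiKernel φ ψ (n + 1) n = 1) (v : ℕ → ℂ) (n : ℕ) :
    b (n + 1) * ∑ k ∈ range (n + 2), jacobiKernel φ ψ (n + 2) k * v k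
      + a (n + 1) * ∑ k ∈ range (n + 1), jacobiKernel φ ψ (n + 1) k * v k
      + b n * ∑ k ∈ range n, jacobiKernel φ ψ n k * v k = v (n + 1) := by
  have hnn : jacobiKernel φ ψ n n = 0 := by simp only [jacobiKernel]; ring
  have hlow : ∑ k ∈ range n, jacobiKernel φ ψ n k * v k
      = ∑ k ∈ range (n + 1), jacobiKernel φ ψ n k * v k := by
    rw [sum_range_succ, hnn, zero_mul, add_zero]
  have hcancel : b (n + 1) * ∑ k ∈ range (n + 1), jacobiKernel φ ψ (n + 2) k * v k
      + a (n + 1) * ∑ k ∈ range (n + 1), jacobiKernel φ ψ (n + 1) k * v k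
      + b n * ∑ k ∈ range (n + 1), jacobiKernel φ ψ n k * v k = 0 := by
    simp only [mul_sum, ← sum_add_distrib]
    refine sum_eq_zero fun k _ => ?_
    linear_combination -v k * hφ.jacobiKernel_left hψ k n
  rw [sum_range_succ _ (n + 1), hlow]
  linear_combination hcancel + v (n + 1) * hW (n + 1)

/-- Variation of constants: the difference of the two sides solves the recurrence at `0`
and vanishes at `0` and `1`. -/
theorem eq_add_sum_jacobiKernel (hb : ∀ n, b n ≠ 0) (hφ : IsJacobiSolution a b 0 φ)
    (hψ : IsJacobiSolution a b 0 ψ) (hW : ∀ n, (b n : ℂ) * jacobiKernel φ ψ (n + 1) n = 1)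
    (hv : IsJacobiSolution a b z v) (hw : IsJacobiSolution a b 0 w) (h0 : v 0 = w 0)
    (h1 : v 1 = w 1 + z * (jacobiKernel φ ψ 1 0 * v 0)) (n : ℕ) :
    v n = w n + z * ∑ k ∈ range n, jacobiKernel φ ψ n k * v k := by
  set e : ℕ → ℂ := fun n => v n - w n - z * ∑ k ∈ range n, jacobiKernel φ ψ n k * v k
  have he : IsJacobiSolution a b 0 e := fun n => by
    simp only [e]
    linear_combination hv n - hw n + z * hφ.sum_jacobiKernel hψ hW v n
  have := congrFun (he.eq_zero hb (by simp [e, h0]) (by simp [e, h1])) n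
  simp only [e, Pi.zero_apply] at this
  linear_combination this

end IsJacobiSolution

theorem summable_sqrt_sq_add_sq_rpow {φ ψ : ℕ → ℂ} {α : ℝ} (hα0 : 0 ≤ α) (hα1 : α ≤ 1)
    (hφ : Summable fun n => ‖φ n‖ ^ (2 * α)) (hψ : Summable fun n => ‖ψ n‖ ^ (2 * α)) :
    Summable fun n => √(‖φ n‖ ^ 2 + ‖ψ n‖ ^ 2) ^ (2 * α) :=
  (hφ.add hψ).of_nonneg_of_le (fun n => by positivity) fun n =>
    sqrt_sq_add_sq_rpow_two_mul_le (norm_nonneg _) (norm_nonneg _) hα0 hα1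

theorem norm_le_mul_exp_of_eq_add_sum_jacobiKernel {φ ψ v w : ℕ → ℂ} {z : ℂ} {α : ℝ}
    (hα0 : 0 < α) (hα1 : α ≤ 1) (hφ : Summable fun n => ‖φ n‖ ^ (2 * α))
    (hψ : Summable fun n => ‖ψ n‖ ^ (2 * α)) (hw : ∀ n, ‖w n‖ ≤ √(‖φ n‖ ^ 2 + ‖ψ n‖ ^ 2))
    (hv : ∀ n, v n = w n + z * ∑ k ∈ range n, jacobiKernel φ ψ n k * v k) (n : ℕ) :
    ‖v n‖ ≤ √(‖φ n‖ ^ 2 + ‖ψ n‖ ^ 2) *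
      Real.exp (1 / α * (∑' n, (‖φ n‖ ^ (2 * α) + ‖ψ n‖ ^ (2 * α))) * ‖z‖ ^ α) := by
  refine norm_le_mul_exp_of_eq_add_sum hα0 hα1 (fun _ => Real.sqrt_nonneg _) hw
    (fun n k => norm_mul_sub_mul_le _ _ _ _) (fun n => ?_) hv n
  calc ∑ k ∈ range n, √(‖φ k‖ ^ 2 + ‖ψ k‖ ^ 2) ^ (2 * α)
      ≤ ∑ k ∈ range n, (‖φ k‖ ^ (2 * α) + ‖ψ k‖ ^ (2 * α)) := sum_le_sum fun k _ =>
        sqrt_sq_add_sq_rpow_two_mul_le (norm_nonneg _) (norm_nonneg _) hα0.le hα1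
    _ ≤ _ := (hφ.add hψ).sum_le_tsum _ fun _ _ => by positivity

theorem one_div_le_of_mul_jacobiKernel_eq_one {φ ψ : ℕ → ℂ} {β : ℝ} (hβ : 0 < β) {n : ℕ}
    (h : (β : ℂ) * jacobiKernel φ ψ (n + 1) n = 1) :
    1 / β ≤ √(‖φ (n + 1)‖ ^ 2 + ‖ψ (n + 1)‖ ^ 2) * √(‖φ n‖ ^ 2 + ‖ψ n‖ ^ 2) := by
  have h' := congrArg norm h
  rw [norm_mul, Complex.norm_real, Real.norm_of_nonneg hβ.le, norm_one] at h'
  exact eq_one_div_of_mul_eq_one_right h' ▸ norm_mul_sub_mul_le _ _ _ _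

section Orthonormal

variable {a b : ℕ → ℝ} {P Q : ℕ → ℂ → ℂ}

theorem orthonormal_mul_jacobiKernel_eq_one (hP0 : ∀ z : ℂ, P 0 z = 1) (hQ0 : ∀ z : ℂ, Q 0 z = 0)
    (hQrec0 : ∀ z : ℂ, z * Q 0 z = (b 0 : ℂ) * Q 1 z + (a 0 : ℂ) * Q 0 z - 1)
    (hP : IsJacobiSolution a b 0 (P · 0)) (hQ : IsJacobiSolution a b 0 (Q · 0)) (n : ℕ) :
    (b n : ℂ) * jacobiKernel (P · 0) (Q · 0) (n + 1) n = 1 := by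
  rw [hP.mul_jacobiKernel_succ_self hQ n]
  have h := hQrec0 0
  simp only [jacobiKernel, hP0, hQ0] at h ⊢
  linear_combination -h

theorem orthonormal_eq_add_sum_jacobiKernel (hb : ∀ n, b n ≠ 0)
    (hP0 : ∀ z : ℂ, P 0 z = 1) (hQ0 : ∀ z : ℂ, Q 0 z = 0)
    (hPrec0 : ∀ z : ℂ, z * P 0 z = (b 0 : ℂ) * P 1 z + (a 0 : ℂ) * P 0 z)
    (hQrec0 : ∀ z : ℂ, z * Q 0 z = (b 0 : ℂ) * Q 1 z + (a 0 : ℂ) * Q 0 z - 1)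
    (hP : ∀ z, IsJacobiSolution a b z (P · z)) (hQ : ∀ z, IsJacobiSolution a b z (Q · z))
    (z : ℂ) (n : ℕ) :
    P n z = P n 0 + z * ∑ k ∈ range n, jacobiKernel (P · 0) (Q · 0) n k * P k z ∧
      Q n z = Q n 0 + z * ∑ k ∈ range n, jacobiKernel (P · 0) (Q · 0) n k * Q k z := by
  have hW := orthonormal_mul_jacobiKernel_eq_one hP0 hQ0 hQrec0 (hP 0) (hQ 0)
  have hb0 : (b 0 : ℂ) ≠ 0 := Complex.ofReal_ne_zero.2 (hb 0)
  refine ⟨IsJacobiSolution.eq_add_sum_jacobiKernel hb (hP 0) (hQ 0) hW (hP z) (hP 0) ((hP0 z).trans (hP0 0).symm) ?_ n,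
    IsJacobiSolution.eq_add_sum_jacobiKernel hb (hP 0) (hQ 0) hW (hQ z) (hQ 0) ((hQ0 z).trans (hQ0 0).symm) ?_ n⟩
  · have h := hPrec0 z
    have h' := hPrec0 0
    have hq := hQrec0 0
    simp only [jacobiKernel, hP0, hQ0] at h h' hq ⊢
    exact mul_left_cancel₀ hb0 (by linear_combination h' - h + z * hq)
  · have h := hQrec0 z
    have h' := hQrec0 0
    simp only [jacobiKernel, hP0, hQ0] at h h' ⊢
    exact mul_left_cancel₀ hb0 (by linear_combination h' - h)

end Orthonormal

/-- Berg–Szwarc, Theorem 1.2: for `0 < α ≤ 1` the conditions (i) and (ii) are equivalent,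
and when they hold the moment problem is indeterminate, the sequence of reciprocals of the
recurrence coefficients is in `ℓ^α`, and `P(z) ≤ C·exp(K·|z|^α)` with the explicit
constants `C` and `K`. -/
theorem stmt_0 (a b : ℕ → ℝ) (hb : ∀ n, 0 < b n)
    (P Q : ℕ → ℂ → ℂ)
    (hP0 : ∀ z : ℂ, P 0 z = 1) (hQ0 : ∀ z : ℂ, Q 0 z = 0)
    (hPrec0 : ∀ z : ℂ, z * P 0 z = (b 0 : ℂ) * P 1 z + (a 0 : ℂ) * P 0 z)
    (hQrec0 : ∀ z : ℂ, z * Q 0 z = (b 0 : ℂ) * Q 1 z + (a 0 : ℂ) * Q 0 z - 1)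
    (hPrec : ∀ (n : ℕ) (z : ℂ), z * P (n+1) z =
      (b (n+1) : ℂ) * P (n+2) z + (a (n+1) : ℂ) * P (n+1) z + (b n : ℂ) * P n z)
    (hQrec : ∀ (n : ℕ) (z : ℂ), z * Q (n+1) z =
      (b (n+1) : ℂ) * Q (n+2) z + (a (n+1) : ℂ) * Q (n+1) z + (b n : ℂ) * Q n z)
    (α : ℝ) (hα0 : 0 < α) (hα1 : α ≤ 1) :
    ((Summable (fun n => ‖P n 0‖ ^ (2 * α)) ∧
      Summable (fun n => ‖Q n 0‖ ^ (2 * α))) ↔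
      (∀ z : ℂ, Summable (fun n => ‖P n z‖ ^ (2 * α)) ∧
        Summable (fun n => ‖Q n z‖ ^ (2 * α)))) ∧
    ((Summable (fun n => ‖P n 0‖ ^ (2 * α)) ∧
      Summable (fun n => ‖Q n 0‖ ^ (2 * α))) →
      Summable (fun n => ‖P n 0‖ ^ 2 + ‖Q n 0‖ ^ 2) ∧
      Summable (fun n => (1 / b n) ^ α) ∧
      ∀ z : ℂ, Real.sqrt (∑' n, ‖P n z‖ ^ 2) ≤
        Real.sqrt (∑' n, (‖P n 0‖ ^ 2 + ‖Q n 0‖ ^ 2)) *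
          Real.exp ((1 / α) *
            (∑' n, (‖P n 0‖ ^ (2 * α) + ‖Q n 0‖ ^ (2 * α))) *
            ‖z‖ ^ α)) := by
  have hP : ∀ z, IsJacobiSolution a b z (P · z) := fun z n => hPrec n z
  have hQ : ∀ z, IsJacobiSolution a b z (Q · z) := fun z n => hQrec n z
  have hvar := orthonormal_eq_add_sum_jacobiKernel (fun n => (hb n).ne') hP0 hQ0 hPrec0
    hQrec0 hP hQ
  set c : ℕ → ℝ := fun n => √(‖P n 0‖ ^ 2 + ‖Q n 0‖ ^ 2)
  have hc0 : ∀ n, 0 ≤ c n := fun n => Real.sqrt_nonneg _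
  have hPc : ∀ n, ‖P n 0‖ ≤ c n := fun n =>
    Real.le_sqrt_of_sq_le (le_add_of_nonneg_right (sq_nonneg _))
  have hQc : ∀ n, ‖Q n 0‖ ≤ c n := fun n =>
    Real.le_sqrt_of_sq_le (le_add_of_nonneg_left (sq_nonneg _))
  refine ⟨⟨fun ⟨hsP, hsQ⟩ z => ?_, fun h => h 0⟩, fun ⟨hsP, hsQ⟩ => ?_⟩
  · have hsc := summable_sqrt_sq_add_sq_rpow hα0.le hα1 hsP hsQ
    exact ⟨summable_norm_rpow_of_norm_le_mul (by positivity) hc0 (Real.exp_pos _).le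
        (norm_le_mul_exp_of_eq_add_sum_jacobiKernel hα0 hα1 hsP hsQ hPc (hvar z · |>.1)) hsc,
      summable_norm_rpow_of_norm_le_mul (by positivity) hc0 (Real.exp_pos _).le
        (norm_le_mul_exp_of_eq_add_sum_jacobiKernel hα0 hα1 hsP hsQ hQc (hvar z · |>.2)) hsc⟩
  have hsq : Summable fun n => ‖P n 0‖ ^ 2 + ‖Q n 0‖ ^ 2 := by
    simpa only [Real.rpow_two] using
      (summable_norm_rpow_of_le (by positivity) (by linarith) hsP (q := 2)).add
        (summable_norm_rpow_of_le (by positivity) (by linarith) hsQ (q := 2))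
  refine ⟨hsq, ?_, fun z => sqrt_tsum_norm_sq_le (Real.exp_pos _).le (fun n => by positivity)
    (norm_le_mul_exp_of_eq_add_sum_jacobiKernel hα0 hα1 hsP hsQ hPc (hvar z · |>.1)) hsq⟩
  refine summable_rpow_of_le_mul_succ hα0.le (fun n => (one_div_pos.2 (hb n)).le) hc0
    (fun n => ?_) (summable_sqrt_sq_add_sq_rpow hα0.le hα1 hsP hsQ)
  exact one_div_le_of_mul_jacobiKernel_eq_one (hb n)
    (orthonormal_mul_jacobiKernel_eq_one hP0 hQ0 hQrec0 (hP 0) (hQ 0) n)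
end

section
/- Assume the Berezanskii conditions. Let r_{-1}, r_0 ∈ ℂ with (r_0, r_{-1}) ≠ (0,0), and define functions r_n : ℂ → ℂ for n ≥ 1 by the recurrence z·r_n(z) = b_n r_{n+1}(z) + a_n r_n(z) + b_{n-1} r_{n-1}(z) for n ≥ 0, where r_{-1} and r_0 denote the constant functions with the given values. Then for every z ∈ ℂ there exists a constant K_z > 0 such that for all n ≥ 0: max(|r_n(z)|, |r_{n+1}(z)|) ≥ K_z/√(b_{n+1}). -/
/-!
Fix `z` and write `x n = r n z`. The recurrence gives
`b (k+1) ‖x (k+1)‖ ≤ ‖z - a (k+2)‖ ‖x (k+2)‖ + b (k+2) ‖x (k+3)‖`, so for suitable weights the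
quantity `V k = max (u k ‖x (k+2)‖) (v k ‖x (k+1)‖)` satisfies `V k ≤ (1 + s k) V (k+1)` with
`s k = ‖z - a (k+2)‖ / √(b (k+1) b (k+2))`, which is summable by the Berezanskii condition.
Hence `V k ≥ V N / exp (∑ s) > 0` for all `k ≥ N`. The weights are `u k = √b (k+1)`,
`v k = √b k` in the log-concave case and `u k = b (k+1) / √b k`, `v k = √b (k+1)` in the
log-convex case; in both cases they are at most `√b (k+2)`, because `b` is eventually
nondecreasing (a nonincreasing tail would contradict `b n b (n+1) → ∞`). A nontrivial solution
never has two consecutive zeros, so `V N > 0`, and the finitely many remaining indices are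
handled by taking a minimum.
-/

open Finset Filter

lemma exists_pos_forall_le_of_forall_ge {f : ℕ → ℝ} (hf : ∀ n, 0 < f n) {κ : ℝ} (hκ : 0 < κ)
    {N : ℕ} (hN : ∀ n ≥ N, κ ≤ f n) : ∃ K > 0, ∀ n, K ≤ f n := by
  set m := (range (N + 1)).inf' nonempty_range_add_one f
  refine ⟨min κ m, lt_min hκ ((lt_inf'_iff _).2 fun n _ ↦ hf n), fun n ↦ ?_⟩
  rcases le_or_gt N n with hn | hn
  · exact (min_le_left _ _).trans (hN n hn)
  · exact (min_le_right _ _).trans (inf'_le f (mem_range.2 (by omega)))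

lemma exists_pos_le_of_le_one_add_mul_succ {V s : ℕ → ℝ} {N : ℕ} (hs : ∀ n, 0 ≤ s n)
    (hsum : Summable s) (hV : 0 < V N) (hstep : ∀ n ≥ N, V n ≤ (1 + s n) * V (n + 1)) :
    ∃ κ > 0, ∀ n ≥ N, κ ≤ V n := by
  have hprod : ∀ n ≥ N, V N ≤ (∏ k ∈ Ico N n, (1 + s k)) * V n := by
    intro n hn
    induction n, hn using Nat.le_induction with
    | base => simp
    | succ n hn ih =>
      rw [prod_Ico_succ_top hn, mul_assoc]
      exact ih.trans (mul_le_mul_of_nonneg_left (hstep n hn)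
        (prod_nonneg fun k _ ↦ by linarith [hs k]))
  refine ⟨V N / Real.exp (∑' k, s k), by positivity, fun n hn ↦ ?_⟩
  have hVn : 0 < V n := pos_of_mul_pos_right (hV.trans_le (hprod n hn))
    (prod_nonneg fun k _ ↦ by linarith [hs k])
  rw [div_le_iff₀ (Real.exp_pos _), mul_comm]
  calc V N ≤ (∏ k ∈ Ico N n, (1 + s k)) * V n := hprod n hn
    _ ≤ Real.exp (∑ k ∈ Ico N n, s k) * V n := by
      gcongr; exact Real.prod_one_add_le_exp_sum _ hs
    _ ≤ Real.exp (∑' k, s k) * V n := by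
      gcongr; exact hsum.sum_le_tsum _ fun k _ ↦ hs k

/-- Conditions on the weights `u`, `v` at index `k` under which `weightedPairNorm u v x` is almost
nonincreasing along solutions of the recurrence and bounded by `√b (k+2)` times the norm of the
pair `(x (k+1), x (k+2))`. -/
structure IsAdmissibleWeight (b u v : ℕ → ℝ) (k : ℕ) : Prop where
  u_pos : 0 < u k
  v_pos : 0 < v k
  u_le_v_succ : u k ≤ v (k + 1)
  v_mul_le : v k * b (k + 2) ≤ b (k + 1) * u (k + 1)
  v_mul_sqrt_le : v k * √(b (k + 2)) ≤ √(b (k + 1)) * v (k + 1)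
  u_le_sqrt : u k ≤ √(b (k + 2))
  v_le_sqrt : v k ≤ √(b (k + 2))

noncomputable def weightedPairNorm (u v : ℕ → ℝ) (x : ℕ → ℂ) (k : ℕ) : ℝ :=
  max (u k * ‖x (k + 2)‖) (v k * ‖x (k + 1)‖)

section BerezanskiiConditions

variable {a b : ℕ → ℝ} {k : ℕ}

lemma exists_lt_succ_of_summable (hb : ∀ n, 0 < b n)
    (hsum : Summable fun n ↦ (√(b (n + 1) * b n))⁻¹) (m : ℕ) : ∃ n ≥ m, b n < b (n + 1) := by
  by_contra! hanti
  have hle : ∀ n ≥ m, b n ≤ b m := fun n hn ↦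
    antitoneOn_nat_Ici_of_succ_le hanti (Set.mem_Ici.2 le_rfl) (Set.mem_Ici.2 hn) hn
  obtain ⟨n, hn⟩ := (eventually_ge_atTop m).and
    (hsum.tendsto_atTop_zero.eventually_lt_const (inv_pos.2 (hb m))) |>.exists
  have hsqrt : √(b (n + 1) * b n) ≤ b m := by
    rw [Real.sqrt_le_left (hb m).le, sq]
    exact mul_le_mul (hle _ (by omega)) (hle n hn.1) (hb n).le (hb m).le
  exact (inv_anti₀ (Real.sqrt_pos.2 (mul_pos (hb _) (hb n))) hsqrt).not_gt hn.2

lemma eventually_le_succ_of_logConvex (hb : ∀ n, 0 < b n)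
    (hsum : Summable fun n ↦ (√(b (n + 1) * b n))⁻¹) {n₀ : ℕ}
    (hconv : ∀ n ≥ n₀, b (n + 1) ^ 2 ≤ b n * b (n + 2)) :
    ∃ n₁ ≥ n₀, ∀ n ≥ n₁, b n ≤ b (n + 1) := by
  obtain ⟨n₁, hn₁, hlt⟩ := exists_lt_succ_of_summable hb hsum n₀
  refine ⟨n₁, hn₁, fun n hn ↦ ?_⟩
  induction n, hn using Nat.le_induction with
  | base => exact hlt.le
  | succ n hn ih =>
    have := hconv n (hn₁.trans hn)
    nlinarith [hb n, hb (n + 1), hb (n + 2)]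

lemma eventually_le_succ_of_logConcave (hb : ∀ n, 0 < b n)
    (hsum : Summable fun n ↦ (√(b (n + 1) * b n))⁻¹) {n₀ : ℕ}
    (hconc : ∀ n ≥ n₀, b n * b (n + 2) ≤ b (n + 1) ^ 2) :
    ∀ n ≥ n₀, b n ≤ b (n + 1) := by
  by_contra! ⟨m, hm, hlt⟩
  have hanti : ∀ n ≥ m, b (n + 1) ≤ b n := by
    intro n hn
    induction n, hn using Nat.le_induction with
    | base => exact hlt.le
    | succ n hn ih =>
      have := hconc n (hm.trans hn)
      nlinarith [hb n, hb (n + 1), hb (n + 2)]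
  obtain ⟨n, hn, hlt'⟩ := exists_lt_succ_of_summable hb hsum m
  exact (hanti n hn).not_gt hlt'

lemma isAdmissibleWeight_of_logConcave (hb : ∀ n, 0 < b n) (h₀ : b k ≤ b (k + 1))
    (h₁ : b (k + 1) ≤ b (k + 2)) (hconc : b k * b (k + 2) ≤ b (k + 1) ^ 2) :
    IsAdmissibleWeight b (fun k ↦ √(b (k + 1))) (fun k ↦ √(b k)) k := by
  have hsq : √(b k) * √(b (k + 2)) ≤ b (k + 1) := by
    rw [← Real.sqrt_mul (hb k).le, Real.sqrt_le_left (hb _).le]; exact hconc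
  have hsq1 := Real.mul_self_sqrt (hb (k + 1)).le
  refine ⟨Real.sqrt_pos.2 (hb _), Real.sqrt_pos.2 (hb _), le_rfl, ?_, by rwa [hsq1],
    Real.sqrt_le_sqrt h₁, Real.sqrt_le_sqrt (h₀.trans h₁)⟩
  have hsq2 := Real.mul_self_sqrt (hb (k + 2)).le
  calc √(b k) * b (k + 2) = (√(b k) * √(b (k + 2))) * √(b (k + 2)) := by rw [mul_assoc, hsq2]
    _ ≤ b (k + 1) * √(b (k + 2)) := by gcongr

lemma isAdmissibleWeight_of_logConvex (hb : ∀ n, 0 < b n) (h₁ : b (k + 1) ≤ b (k + 2))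
    (hconv : b (k + 1) ^ 2 ≤ b k * b (k + 2)) :
    IsAdmissibleWeight b (fun k ↦ b (k + 1) / √(b k)) (fun k ↦ √(b (k + 1))) k := by
  have hsk := Real.sqrt_pos.2 (hb k)
  have hsk1 := Real.sqrt_pos.2 (hb (k + 1))
  have hu : b (k + 1) / √(b k) ≤ √(b (k + 2)) := by
    rw [div_le_iff₀ hsk, ← Real.sqrt_mul (hb _).le,
      Real.le_sqrt (hb _).le (mul_pos (hb _) (hb _)).le, mul_comm]
    exact hconv
  refine ⟨div_pos (hb _) hsk, hsk1, hu, ?_, le_rfl, hu, Real.sqrt_le_sqrt h₁⟩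
  refine le_of_eq ?_
  field_simp
  rw [Real.sq_sqrt (hb _).le, mul_comm]

lemma exists_isAdmissibleWeight (hb : ∀ n, 0 < b n)
    (hsum : Summable fun n ↦ (√(b (n + 1) * b n))⁻¹)
    (hreg : (∃ n₀, ∀ n ≥ n₀, b (n + 1) ^ 2 ≤ b n * b (n + 2)) ∨
      (∃ n₀, ∀ n ≥ n₀, b n * b (n + 2) ≤ b (n + 1) ^ 2)) :
    ∃ u v : ℕ → ℝ, ∃ N, ∀ k ≥ N, IsAdmissibleWeight b u v k := by
  rcases hreg with ⟨n₀, hconv⟩ | ⟨n₀, hconc⟩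
  · obtain ⟨n₁, hn₁, hmono⟩ := eventually_le_succ_of_logConvex hb hsum hconv
    exact ⟨_, _, n₁, fun k hk ↦ isAdmissibleWeight_of_logConvex hb (hmono (k + 1) (by omega))
      (hconv k (by omega))⟩
  · have hmono := eventually_le_succ_of_logConcave hb hsum hconc
    exact ⟨_, _, n₀, fun k hk ↦ isAdmissibleWeight_of_logConcave hb (hmono k hk)
      (hmono (k + 1) (by omega)) (hconc k hk)⟩

lemma summable_norm_sub_div_sqrt
    (hsum : Summable fun n ↦ (1 + |a (n + 1)|) / √(b (n + 1) * b n)) (z : ℂ) :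
    Summable fun k ↦ ‖z - a (k + 2)‖ / √(b (k + 1) * b (k + 2)) := by
  refine Summable.of_nonneg_of_le (fun k ↦ by positivity) (fun k ↦ ?_)
    (((summable_nat_add_iff 1).2 hsum).mul_left (max ‖z‖ 1))
  have hz : ‖z‖ ≤ max ‖z‖ 1 := le_max_left _ _
  have hone : 1 ≤ max ‖z‖ 1 := le_max_right _ _
  have hza : ‖z - a (k + 2)‖ ≤ max ‖z‖ 1 * (1 + |a (k + 2)|) := by
    calc ‖z - a (k + 2)‖ ≤ ‖z‖ + |a (k + 2)| := by
          simpa [Complex.norm_real] using norm_sub_le z (a (k + 2) : ℂ)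
      _ ≤ max ‖z‖ 1 * (1 + |a (k + 2)|) := by nlinarith [abs_nonneg (a (k + 2))]
  rw [mul_comm (b (k + 1)), ← mul_div_assoc]
  exact div_le_div_of_nonneg_right hza (Real.sqrt_nonneg _)

end BerezanskiiConditions

section Recurrence

variable {a b : ℕ → ℝ} {z : ℂ} {x : ℕ → ℂ}

lemma mul_norm_le_of_recurrence (hb : ∀ n, 0 < b n)
    (hx : ∀ n, z * x (n + 1) = b (n + 1) * x (n + 2) + a (n + 1) * x (n + 1) + b n * x n)
    (n : ℕ) : b n * ‖x n‖ ≤ ‖z - a (n + 1)‖ * ‖x (n + 1)‖ + b (n + 1) * ‖x (n + 2)‖ := by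
  have hxn : (b n : ℂ) * x n = (z - a (n + 1)) * x (n + 1) - b (n + 1) * x (n + 2) := by
    linear_combination -(hx n)
  have hnorm : ∀ m, ‖(b m : ℂ)‖ = b m := fun m ↦ by
    rw [Complex.norm_real, Real.norm_of_nonneg (hb m).le]
  calc b n * ‖x n‖ = ‖(b n : ℂ) * x n‖ := by rw [norm_mul, hnorm]
    _ ≤ ‖(z - a (n + 1)) * x (n + 1)‖ + ‖(b (n + 1) : ℂ) * x (n + 2)‖ := by
      rw [hxn]; exact norm_sub_le _ _
    _ = _ := by rw [norm_mul, norm_mul, hnorm]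

lemma max_norm_pos_of_recurrence (hb : ∀ n, 0 < b n)
    (hx : ∀ n, z * x (n + 1) = b (n + 1) * x (n + 2) + a (n + 1) * x (n + 1) + b n * x n)
    (h₀₁ : ¬(x 0 = 0 ∧ x 1 = 0)) (n : ℕ) : 0 < max ‖x n‖ ‖x (n + 1)‖ := by
  suffices ¬(x n = 0 ∧ x (n + 1) = 0) by
    simp only [lt_max_iff, norm_pos_iff]; tauto
  induction n with
  | zero => exact h₀₁
  | succ n ih =>
    rintro ⟨h₁, h₂⟩
    have := hx n
    rw [h₁, h₂] at this
    exact ih ⟨by simpa [(hb n).ne'] using this, h₁⟩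

lemma weightedPairNorm_le_one_add_mul_succ (hb : ∀ n, 0 < b n)
    (hx : ∀ n, z * x (n + 1) = b (n + 1) * x (n + 2) + a (n + 1) * x (n + 1) + b n * x n)
    {u v : ℕ → ℝ} {k : ℕ} (hw : IsAdmissibleWeight b u v k) :
    weightedPairNorm u v x k ≤
      (1 + ‖z - a (k + 2)‖ / √(b (k + 1) * b (k + 2))) * weightedPairNorm u v x (k + 1) := by
  set c := ‖z - a (k + 2)‖
  set s := c / √(b (k + 1) * b (k + 2))
  set V := weightedPairNorm u v x (k + 1)
  have hV₁ : u (k + 1) * ‖x (k + 3)‖ ≤ V := le_max_left _ _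
  have hV₂ : v (k + 1) * ‖x (k + 2)‖ ≤ V := le_max_right _ _
  have hV : 0 ≤ V := (mul_nonneg (hw.u_pos.le.trans hw.u_le_v_succ) (norm_nonneg _)).trans hV₂
  have hs : 0 ≤ s := by positivity
  have hcoef : c * v k ≤ b (k + 1) * s * v (k + 1) := by
    have hsk1 := Real.sqrt_pos.2 (hb (k + 1))
    have hsk2 := Real.sqrt_pos.2 (hb (k + 2))
    have : b (k + 1) * s * v (k + 1) = c * (√(b (k + 1)) * v (k + 1)) / √(b (k + 2)) := by
      simp only [s, Real.sqrt_mul (hb _).le]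
      field_simp
      rw [Real.sq_sqrt (hb _).le]
      ring
    rw [this, le_div_iff₀ hsk2, mul_assoc]
    exact mul_le_mul_of_nonneg_left hw.v_mul_sqrt_le (norm_nonneg _)
  refine max_le ?_ ?_
  · calc u k * ‖x (k + 2)‖ ≤ v (k + 1) * ‖x (k + 2)‖ := by gcongr; exact hw.u_le_v_succ
      _ ≤ (1 + s) * V := by nlinarith
  · refine le_of_mul_le_mul_left ?_ (hb (k + 1))
    have hrec := mul_norm_le_of_recurrence hb hx (k + 1)
    calc b (k + 1) * (v k * ‖x (k + 1)‖) = v k * (b (k + 1) * ‖x (k + 1)‖) := by ring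
      _ ≤ v k * (c * ‖x (k + 2)‖ + b (k + 2) * ‖x (k + 3)‖) := by
        gcongr; exact hw.v_pos.le
      _ = c * v k * ‖x (k + 2)‖ + v k * b (k + 2) * ‖x (k + 3)‖ := by ring
      _ ≤ b (k + 1) * s * v (k + 1) * ‖x (k + 2)‖ + b (k + 1) * u (k + 1) * ‖x (k + 3)‖ :=
        add_le_add (mul_le_mul_of_nonneg_right hcoef (norm_nonneg _))
          (mul_le_mul_of_nonneg_right hw.v_mul_le (norm_nonneg _))
      _ = b (k + 1) * (s * (v (k + 1) * ‖x (k + 2)‖) + u (k + 1) * ‖x (k + 3)‖) := by ring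
      _ ≤ b (k + 1) * (s * V + V) := mul_le_mul_of_nonneg_left (by gcongr) (hb _).le
      _ = b (k + 1) * ((1 + s) * V) := by ring

lemma weightedPairNorm_pos {u v : ℕ → ℝ} {k : ℕ} (hw : IsAdmissibleWeight b u v k)
    (hx : 0 < max ‖x (k + 1)‖ ‖x (k + 2)‖) : 0 < weightedPairNorm u v x k := by
  rcases lt_max_iff.1 hx with h | h
  · exact lt_max_of_lt_right (mul_pos hw.v_pos h)
  · exact lt_max_of_lt_left (mul_pos hw.u_pos h)

lemma weightedPairNorm_le {u v : ℕ → ℝ} {k : ℕ} (hw : IsAdmissibleWeight b u v k) :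
    weightedPairNorm u v x k ≤ √(b (k + 2)) * max ‖x (k + 1)‖ ‖x (k + 2)‖ :=
  max_le (mul_le_mul hw.u_le_sqrt (le_max_right _ _) (norm_nonneg _) (Real.sqrt_nonneg _))
    (mul_le_mul hw.v_le_sqrt (le_max_left _ _) (norm_nonneg _) (Real.sqrt_nonneg _))

end Recurrence

/-- Berezanskii's theorem (lower bound part): under the Berezanskii conditions, any
non-trivial solution `(r_n)` of the three-term recurrence satisfies, for each `z`,
`max(|r_n(z)|, |r_{n+1}(z)|) ≥ K_z/√(b_{n+1})` for all `n ≥ 0`, where `K_z > 0`. -/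
theorem stmt_2 (a b : ℕ → ℝ) (hb : ∀ n, 0 < b n)
    (r0 rm1 : ℂ) (hne : ¬(r0 = 0 ∧ rm1 = 0))
    (r : ℕ → ℂ → ℂ) (hr0 : ∀ z : ℂ, r 0 z = r0)
    (hrrec0 : ∀ z : ℂ, z * r 0 z = (b 0 : ℂ) * r 1 z + (a 0 : ℂ) * r 0 z + rm1)
    (hrrec : ∀ (n : ℕ) (z : ℂ), z * r (n+1) z =
      (b (n+1) : ℂ) * r (n+2) z + (a (n+1) : ℂ) * r (n+1) z + (b n : ℂ) * r n z)
    (hBer : Summable (fun n : ℕ => (1 + |a (n+1)|) / Real.sqrt (b (n+1) * b n)))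
    (hreg : (∃ n0, ∀ n ≥ n0, (b (n+1)) ^ 2 ≤ b n * b (n+2)) ∨
            (∃ n0, ∀ n ≥ n0, b n * b (n+2) ≤ (b (n+1)) ^ 2))
    :
    ∀ z : ℂ, ∃ K : ℝ, 0 < K ∧ ∀ n : ℕ,
      K / Real.sqrt (b (n + 1)) ≤ max ‖r n z‖ ‖r (n + 1) z‖ := by
  intro z
  set x : ℕ → ℂ := fun n ↦ r n z
  have hx : ∀ n, z * x (n + 1) = b (n + 1) * x (n + 2) + a (n + 1) * x (n + 1) + b n * x n :=
    fun n ↦ hrrec n z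
  have hx₀₁ : ¬(x 0 = 0 ∧ x 1 = 0) := by
    rintro ⟨h₀, h₁⟩
    have h := hrrec0 z
    rw [show r 0 z = 0 from h₀, show r 1 z = 0 from h₁] at h
    exact hne ⟨(hr0 z).symm.trans h₀, by simpa using h.symm⟩
  have hpos := max_norm_pos_of_recurrence hb hx hx₀₁
  have hinv : Summable fun n ↦ (√(b (n + 1) * b n))⁻¹ :=
    hBer.of_nonneg_of_le (fun n ↦ by positivity) fun n ↦ by
      rw [inv_eq_one_div]; gcongr; linarith [abs_nonneg (a (n + 1))]
  obtain ⟨u, v, N, hw⟩ := exists_isAdmissibleWeight hb hinv hreg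
  obtain ⟨κ, hκ, hκle⟩ := exists_pos_le_of_le_one_add_mul_succ (fun k ↦ by positivity)
    (summable_norm_sub_div_sqrt hBer z) (weightedPairNorm_pos (hw N le_rfl) (hpos (N + 1)))
    fun k hk ↦ weightedPairNorm_le_one_add_mul_succ hb hx (hw k hk)
  obtain ⟨K, hK, hKle⟩ := exists_pos_forall_le_of_forall_ge
    (f := fun n ↦ √(b (n + 1)) * max ‖x n‖ ‖x (n + 1)‖)
    (fun n ↦ mul_pos (Real.sqrt_pos.2 (hb _)) (hpos n)) hκ (N := N + 1) fun n hn ↦ by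
      obtain ⟨k, rfl⟩ : ∃ k, n = k + 1 := ⟨n - 1, by omega⟩
      exact (hκle k (by omega)).trans (weightedPairNorm_le (hw k (by omega)))
  refine ⟨K, hK, fun n ↦ ?_⟩
  rw [div_le_iff₀ (Real.sqrt_pos.2 (hb _)), mul_comm]
  exact hKle n
end

section
/- Let (b_n)_{n≥0} be positive real numbers with sup_{n≥0} b_n = ∞, and suppose there exists n_0 such that either b_n² ≤ b_{n-1}·b_{n+1} for all n ≥ n_0, or b_n² ≥ b_{n-1}·b_{n+1} for all n ≥ n_0. Then (b_n) is eventually strictly increasing to infinity: there exists N such that b_n < b_{n+1} for all n ≥ N, and b_n → ∞ as n → ∞. -/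
/-!
Under eventual log-convexity, `y ^ 2 ≤ x * z` shows that one strict increase `b n < b (n + 1)`
forces the next one, so increases propagate forward; under eventual log-concavity the same
computation propagates non-increases `b (n + 1) ≤ b n` instead. A sequence that is eventually
non-increasing is bounded, so unboundedness produces an increase in the first case and excludes
every non-increase in the second. An eventually increasing unbounded sequence tends to infinity.
-/

open Filter Set

section Order

variable {α : Type*} [Preorder α] {f : ℕ → α} {k : ℕ}

lemma bddAbove_range_of_eventually_le [IsDirectedOrder α] {c : α}
    (h : ∀ᶠ n in atTop, f n ≤ c) : BddAbove (range f) :=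
  (isBoundedUnder_of_eventually_le h).bddAbove_range

lemma bddAbove_range_of_succ_le [IsDirectedOrder α] (h : ∀ n ≥ k, f (n + 1) ≤ f n) :
    BddAbove (range f) :=
  bddAbove_range_of_eventually_le (c := f k) <| eventually_atTop.2
    ⟨k, fun _ hn => antitoneOn_nat_Ici_of_succ_le h (le_refl k) hn hn⟩

end Order

section LinearOrder

variable {α : Type*} [LinearOrder α] {f : ℕ → α} {k : ℕ}

lemma exists_lt_succ_of_not_bddAbove
    (hf : ¬BddAbove (range f)) (k : ℕ) : ∃ n ≥ k, f n < f (n + 1) := by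
  by_contra! h
  exact hf (bddAbove_range_of_succ_le h)

lemma tendsto_atTop_of_le_succ_of_not_bddAbove
    (h : ∀ n ≥ k, f n ≤ f (n + 1)) (hf : ¬BddAbove (range f)) : Tendsto f atTop atTop := by
  refine tendsto_atTop.2 fun M => ?_
  obtain ⟨m, hkm, hm⟩ : ∃ m ≥ k, M ≤ f m := by
    by_contra! h'
    exact hf (bddAbove_range_of_eventually_le (eventually_atTop.2 ⟨k, fun n hn => (h' n hn).le⟩))
  filter_upwards [eventually_ge_atTop m] with n hn
  exact hm.trans (monotoneOn_nat_Ici_of_le_succ h hkm (hkm.trans hn) hn)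

end LinearOrder

section LogConvexity

variable {α : Type*} [CommRing α] [LinearOrder α] [IsStrictOrderedRing α]

lemma lt_of_sq_le_mul_of_lt {x y z : α} (hx : 0 < x) (hxy : x < y) (h : y ^ 2 ≤ x * z) :
    y < z := by
  by_contra! hzy
  nlinarith [mul_le_mul_of_nonneg_left hzy hx.le]

lemma le_of_mul_le_sq_of_le {x y z : α} (hx : 0 < x) (hy : 0 ≤ y) (hyx : y ≤ x)
    (h : x * z ≤ y ^ 2) : z ≤ y := by
  by_contra! hyz
  nlinarith [mul_lt_mul_of_pos_left hyz hx, mul_le_mul_of_nonneg_right hyx hy]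

variable {b : ℕ → α} {n₀ : ℕ}

lemma exists_forall_ge_lt_succ_of_sq_le_mul (hb : ∀ n, 0 < b n)
    (hub : ¬BddAbove (range b)) (hconv : ∀ n ≥ n₀, b (n + 1) ^ 2 ≤ b n * b (n + 2)) :
    ∃ N, ∀ n ≥ N, b n < b (n + 1) := by
  obtain ⟨m, hm, hlt⟩ := exists_lt_succ_of_not_bddAbove hub n₀
  refine ⟨m, fun n hn => ?_⟩
  induction n, hn using Nat.le_induction with
  | base => exact hlt
  | succ n hmn ih => exact lt_of_sq_le_mul_of_lt (hb n) ih (hconv n (hm.trans hmn))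

lemma forall_ge_lt_succ_of_mul_le_sq (hb : ∀ n, 0 < b n)
    (hub : ¬BddAbove (range b)) (hconc : ∀ n ≥ n₀, b n * b (n + 2) ≤ b (n + 1) ^ 2) :
    ∀ n ≥ n₀, b n < b (n + 1) := by
  intro m hm
  by_contra! hle
  refine hub (bddAbove_range_of_succ_le (k := m) fun n hn => ?_)
  induction n, hn using Nat.le_induction with
  | base => exact hle
  | succ n hmn ih =>
    exact le_of_mul_le_sq_of_le (hb n) (hb (n + 1)).le ih (hconc n (hm.trans hmn))

end LogConvexity

/-- Lemma (Berg–Szwarc, Lemma 3.1): if `(b n)` is a sequence of positive reals with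
`sup b n = ∞` which is eventually log-convex or eventually log-concave, then `(b n)` is
eventually strictly increasing and tends to infinity. -/
theorem stmt_3 (b : ℕ → ℝ) (hb : ∀ n, 0 < b n)
    (hub : ¬ BddAbove (Set.range b))
    (hreg : (∃ n0, ∀ n ≥ n0, (b (n+1)) ^ 2 ≤ b n * b (n+2)) ∨
            (∃ n0, ∀ n ≥ n0, b n * b (n+2) ≤ (b (n+1)) ^ 2)) :
    (∃ N, ∀ n ≥ N, b n < b (n+1)) ∧ Filter.Tendsto b Filter.atTop Filter.atTop := by
  obtain ⟨N, hN⟩ : ∃ N, ∀ n ≥ N, b n < b (n + 1) := by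
    rcases hreg with ⟨n₀, hconv⟩ | ⟨n₀, hconc⟩
    · exact exists_forall_ge_lt_succ_of_sq_le_mul hb hub hconv
    · exact ⟨n₀, forall_ge_lt_succ_of_mul_le_sq hb hub hconc⟩
  exact ⟨⟨N, hN⟩, tendsto_atTop_of_le_succ_of_not_bddAbove (fun n hn => (hN n hn).le) hub⟩
end

section
/- Assume the Berezanskii conditions. Then n/b_n → 0, n·P_n(0)² → 0 and n·Q_n(0)² → 0 as n → ∞ (i.e. 1/b_n, P_n(0)² and Q_n(0)² are all o(1/n)). -/
/-!
The Berezanskii series `∑ 1 / √(b_{n+1} b_n)` converges, so `b` is unbounded, and eventual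
log-convexity or log-concavity then makes `b` eventually nondecreasing. Hence
`1 / b_{n+1} ≤ 1 / √(b_{n+1} b_n)` is summable and eventually nonincreasing, which gives
`n / b_n → 0`.

At `z = 0` the recurrence gives `b_{n+1} |r_{n+2}| ≤ |a_{n+1}| |r_{n+1}| + b_n |r_n|`. Weighted by
`√b_n` (in the log-convex case shifted by one index, `u_n = √b_n |r_{n+1}|`) it becomes
`u_{n+2} ≤ α_n u_{n+1} + u_n` with `∑ α_n < ∞`, so `u` stays bounded by
`max (u_{N+1}) (u_N) · ∏ (1 + α_k)`, and `n r_n² ≤ C n / b_n → 0`.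
-/

open Filter Topology Finset

theorem exists_le_of_le_mul_add_of_summable {u α : ℕ → ℝ} (hu : ∀ n, 0 ≤ u n)
    (hα : ∀ n, 0 ≤ α n) (hsum : Summable α) {N : ℕ}
    (hrec : ∀ n ≥ N, u (n + 2) ≤ α n * u (n + 1) + u n) :
    ∃ C, ∀ n ≥ N, u n ≤ C := by
  set M : ℕ → ℝ := fun n => max (u (n + 1)) (u n)
  have hM : ∀ n, 0 ≤ M n := fun n => (hu n).trans (le_max_right _ _)
  have hstep : ∀ n ≥ N, M (n + 1) ≤ (1 + α n) * M n := by
    intro n hn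
    have h1 : u (n + 1) ≤ M n := le_max_left _ _
    have h0 : u n ≤ M n := le_max_right _ _
    refine max_le ?_ ?_
    · nlinarith [hrec n hn, hα n]
    · nlinarith [hα n, hM n]
  have hprod : ∀ n ≥ N, M n ≤ M N * ∏ k ∈ Ico N n, (1 + α k) := by
    intro n hn
    induction n, hn using Nat.le_induction with
    | base => simp
    | succ n hn ih =>
      calc M (n + 1) ≤ (1 + α n) * M n := hstep n hn
        _ ≤ (1 + α n) * (M N * ∏ k ∈ Ico N n, (1 + α k)) := by
          gcongr
          linarith [hα n]
        _ = M N * ∏ k ∈ Ico N (n + 1), (1 + α k) := by rw [prod_Ico_succ_top hn]; ring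
  refine ⟨M N * Real.exp (∑' k, α k), fun n hn => ?_⟩
  calc u n ≤ M n := le_max_right _ _
    _ ≤ M N * ∏ k ∈ Ico N n, (1 + α k) := hprod n hn
    _ ≤ M N * Real.exp (∑ k ∈ Ico N n, α k) :=
      mul_le_mul_of_nonneg_left (Real.prod_one_add_le_exp_sum _ hα) (hM N)
    _ ≤ M N * Real.exp (∑' k, α k) := by
      gcongr
      · exact hM N
      · exact hsum.sum_le_tsum _ fun k _ => hα k

theorem tendsto_nat_mul_of_summable_of_antitoneOn {g : ℕ → ℝ} (hg : ∀ n, 0 ≤ g n)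
    (hsum : Summable g) {N : ℕ} (hanti : AntitoneOn g (Set.Ici N)) :
    Tendsto (fun n : ℕ => (n : ℝ) * g n) atTop (𝓝 0) := by
  -- `n g n ≤ 2 ∑_{n/2 ≤ k < n} g k`, the difference of two partial sums of a convergent series
  have hS := hsum.hasSum.tendsto_sum_nat
  have htail : Tendsto (fun n => ∑ k ∈ range n, g k - ∑ k ∈ range (n / 2), g k) atTop (𝓝 0) := by
    simpa using hS.sub (hS.comp (Nat.tendsto_div_const_atTop two_ne_zero))
  refine squeeze_zero' (Eventually.of_forall fun n => mul_nonneg n.cast_nonneg (hg n)) ?_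
    (by simpa using htail.const_mul 2)
  filter_upwards [eventually_ge_atTop (2 * N)] with n hn
  rw [← sum_Ico_eq_sub _ (Nat.div_le_self n 2)]
  have hcard : (n : ℝ) ≤ 2 * (n - n / 2 : ℕ) := by norm_cast; omega
  have hle : (n - n / 2 : ℕ) * g n ≤ ∑ k ∈ Ico (n / 2) n, g k := by
    simpa using card_nsmul_le_sum (Ico (n / 2) n) g (g n) fun k hk =>
      have hk := mem_Ico.1 hk
      hanti (Set.mem_Ici.2 (by omega)) (Set.mem_Ici.2 (by omega)) hk.2.le
  nlinarith [hg n]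

section Monotonicity

variable {b : ℕ → ℝ}

theorem not_isBoundedUnder_of_summable_inv_sqrt_mul (hb : ∀ n, 0 < b n)
    (hc : Summable fun n => 1 / √(b (n + 1) * b n)) :
    ¬ IsBoundedUnder (· ≤ ·) atTop b := by
  rintro ⟨B, hB⟩
  rw [eventually_map] at hB
  obtain ⟨m, hm⟩ := hB.exists
  have hB0 : 0 < B := (hb m).trans_le hm
  have hlow : ∀ᶠ n in atTop, 1 / B ≤ 1 / √(b (n + 1) * b n) := by
    filter_upwards [hB, (tendsto_add_atTop_nat 1).eventually hB] with n hn hn1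
    have := hb n
    have := hb (n + 1)
    gcongr
    calc √(b (n + 1) * b n) ≤ √(B * B) := Real.sqrt_le_sqrt (by gcongr)
      _ = B := Real.sqrt_mul_self hB0.le
  exact (one_div_pos.2 hB0).not_ge (ge_of_tendsto hc.tendsto_atTop_zero hlow)

theorem exists_monotoneOn_Ici_of_logConvex_or_logConcave (hb : ∀ n, 0 < b n)
    (hreg : (∃ n0, ∀ n ≥ n0, (b (n + 1)) ^ 2 ≤ b n * b (n + 2)) ∨
            (∃ n0, ∀ n ≥ n0, b n * b (n + 2) ≤ (b (n + 1)) ^ 2))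
    (hunb : ¬ IsBoundedUnder (· ≤ ·) atTop b) :
    ∃ N, MonotoneOn b (Set.Ici N) := by
  have not_anti : ∀ m, ¬ ∀ n ≥ m, b (n + 1) ≤ b n := fun m h =>
    hunb (isBoundedUnder_of_eventually_le (eventually_atTop.2
      ⟨m, fun n hn => antitoneOn_nat_Ici_of_succ_le h (Set.mem_Ici.2 le_rfl) hn hn⟩))
  rcases hreg with ⟨n0, hcv⟩ | ⟨n0, hcc⟩
  · by_cases h : ∃ m ≥ n0, b m ≤ b (m + 1)
    · obtain ⟨m, hm, hbm⟩ := h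
      refine ⟨m, monotoneOn_nat_Ici_of_le_succ fun n hn => ?_⟩
      induction n, hn using Nat.le_induction with
      | base => exact hbm
      | succ n hn ih => nlinarith [hcv n (hm.trans hn), hb n, hb (n + 1), hb (n + 2)]
    · push Not at h
      exact (not_anti n0 fun n hn => (h n hn).le).elim
  · by_cases h : ∃ m ≥ n0, b (m + 1) < b m
    · obtain ⟨m, hm, hbm⟩ := h
      refine (not_anti m fun n hn => ?_).elim
      induction n, hn using Nat.le_induction with
      | base => exact hbm.le
      | succ n hn ih => nlinarith [hcc n (hm.trans hn), hb n, hb (n + 1), hb (n + 2)]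
    · push Not at h
      exact ⟨n0, monotoneOn_nat_Ici_of_le_succ h⟩

theorem tendsto_nat_div_of_summable_inv_sqrt_mul (hb : ∀ n, 0 < b n) {N : ℕ}
    (hmono : MonotoneOn b (Set.Ici N)) (hc : Summable fun n => 1 / √(b (n + 1) * b n)) :
    Tendsto (fun n : ℕ => (n : ℝ) / b n) atTop (𝓝 0) := by
  have hinv : Summable fun n => 1 / b n := by
    refine (summable_nat_add_iff 1).1 (hc.of_norm_bounded_eventually_nat ?_)
    filter_upwards [eventually_ge_atTop N] with n hn
    have := hb n
    have := hb (n + 1)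
    rw [Real.norm_of_nonneg (by positivity)]
    gcongr
    calc √(b (n + 1) * b n) ≤ √(b (n + 1) * b (n + 1)) :=
          Real.sqrt_le_sqrt (by gcongr; exact hmono hn (Set.mem_Ici.2 (by omega)) (by omega))
      _ = b (n + 1) := Real.sqrt_mul_self (hb _).le
  simpa [div_eq_mul_inv] using tendsto_nat_mul_of_summable_of_antitoneOn
    (fun n => one_div_nonneg.2 (hb n).le) hinv
    fun m hm n hn hmn => one_div_le_one_div_of_le (hb m) (hmono hm hn hmn)

end Monotonicity

section ThreeTermInequality

theorem sqrt_mul_le_of_logConcave_step {b0 b1 b2 A p0 p1 p2 : ℝ} (hb0 : 0 < b0) (hb1 : 0 < b1)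
    (hp2 : 0 ≤ p2) (hcc : b0 * b2 ≤ b1 ^ 2) (hrec : b1 * p2 ≤ A * p1 + b0 * p0) :
    √b2 * p2 ≤ A / √(b1 * b0) * (√b1 * p1) + √b0 * p0 := by
  have hs : √b0 * √b2 ≤ b1 := by
    rw [← Real.sqrt_mul hb0.le, ← Real.sqrt_sq hb1.le]
    exact Real.sqrt_le_sqrt hcc
  have hs0 : 0 < √b0 := Real.sqrt_pos.2 hb0
  have hs1 : 0 < √b1 := Real.sqrt_pos.2 hb1
  have e : A / (√b1 * √b0) * (√b1 * p1) = A * p1 / √b0 := by field_simp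
  rw [Real.sqrt_mul hb1.le, e, div_add' _ _ _ hs0.ne', le_div_iff₀ hs0]
  calc √b2 * p2 * √b0 = (√b0 * √b2) * p2 := by ring
    _ ≤ b1 * p2 := mul_le_mul_of_nonneg_right hs hp2
    _ ≤ A * p1 + b0 * p0 := hrec
    _ = A * p1 + √b0 * p0 * √b0 := by rw [mul_right_comm, Real.mul_self_sqrt hb0.le]

theorem sqrt_mul_le_of_logConvex_step {b0 b1 b2 A p1 p2 p3 : ℝ} (hb0 : 0 < b0) (hb1 : 0 < b1)
    (hb2 : 0 < b2) (hp1 : 0 ≤ p1) (hcv : b1 ^ 2 ≤ b0 * b2) (hrec : b2 * p3 ≤ A * p2 + b1 * p1) :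
    √b2 * p3 ≤ A / √(b2 * b1) * (√b1 * p2) + √b0 * p1 := by
  have hs : b1 ≤ √b0 * √b2 := by
    rw [← Real.sqrt_mul hb0.le, ← Real.sqrt_sq hb1.le]
    exact Real.sqrt_le_sqrt hcv
  have hs1 : 0 < √b1 := Real.sqrt_pos.2 hb1
  have hs2 : 0 < √b2 := Real.sqrt_pos.2 hb2
  have e : A / (√b2 * √b1) * (√b1 * p2) = A * p2 / √b2 := by field_simp
  rw [Real.sqrt_mul hb2.le, e, div_add' _ _ _ hs2.ne', le_div_iff₀ hs2]
  calc √b2 * p3 * √b2 = b2 * p3 := by rw [mul_right_comm, Real.mul_self_sqrt hb2.le]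
    _ ≤ A * p2 + b1 * p1 := hrec
    _ ≤ A * p2 + (√b0 * √b2) * p1 := by gcongr
    _ = A * p2 + √b0 * p1 * √b2 := by ring

variable {a b p : ℕ → ℝ}

theorem exists_sqrt_mul_le_of_logConcave (hb : ∀ n, 0 < b n) (hp : ∀ n, 0 ≤ p n)
    (hrec : ∀ n, b (n + 1) * p (n + 2) ≤ |a (n + 1)| * p (n + 1) + b n * p n)
    (hα : Summable fun n => |a (n + 1)| / √(b (n + 1) * b n)) {N : ℕ}
    (hcc : ∀ n ≥ N, b n * b (n + 2) ≤ (b (n + 1)) ^ 2) :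
    ∃ C, ∀ n ≥ N, √(b n) * p n ≤ C :=
  exists_le_of_le_mul_add_of_summable (fun n => mul_nonneg (Real.sqrt_nonneg _) (hp n))
    (fun n => by positivity) hα fun n hn =>
      sqrt_mul_le_of_logConcave_step (hb n) (hb (n + 1)) (hp _) (hcc n hn) (hrec n)

theorem exists_sqrt_mul_succ_le_of_logConvex (hb : ∀ n, 0 < b n) (hp : ∀ n, 0 ≤ p n)
    (hrec : ∀ n, b (n + 1) * p (n + 2) ≤ |a (n + 1)| * p (n + 1) + b n * p n)
    (hα : Summable fun n => |a (n + 1)| / √(b (n + 1) * b n)) {N : ℕ}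
    (hcv : ∀ n ≥ N, (b (n + 1)) ^ 2 ≤ b n * b (n + 2)) :
    ∃ C, ∀ n ≥ N, √(b n) * p (n + 1) ≤ C :=
  exists_le_of_le_mul_add_of_summable (u := fun n => √(b n) * p (n + 1))
    (fun n => mul_nonneg (Real.sqrt_nonneg _) (hp _)) (fun n => by positivity)
    ((summable_nat_add_iff 1).2 hα) fun n hn =>
      sqrt_mul_le_of_logConvex_step (hb n) (hb (n + 1)) (hb (n + 2)) (hp _) (hcv n hn)
        (hrec (n + 1))

theorem tendsto_mul_sq_of_sqrt_mul_le {ι : Type*} {l : Filter ι} {b f q : ι → ℝ}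
    (hb : ∀ i, 0 < b i) (hf : ∀ i, 0 ≤ f i) (hq : ∀ i, 0 ≤ q i) {C : ℝ}
    (hC : ∀ᶠ i in l, √(b i) * q i ≤ C) (hlim : Tendsto (fun i => f i / b i) l (𝓝 0)) :
    Tendsto (fun i => f i * q i ^ 2) l (𝓝 0) := by
  refine squeeze_zero' (Eventually.of_forall fun i => mul_nonneg (hf i) (sq_nonneg _)) ?_
    (by simpa using hlim.const_mul (C ^ 2))
  filter_upwards [hC] with i hi
  have hbq : b i * q i ^ 2 ≤ C ^ 2 := by
    rw [← Real.sq_sqrt (hb i).le, ← mul_pow]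
    exact pow_le_pow_left₀ (mul_nonneg (Real.sqrt_nonneg _) (hq i)) hi 2
  have := (hb i).ne'
  calc f i * q i ^ 2 = f i / b i * (b i * q i ^ 2) := by field_simp
    _ ≤ f i / b i * C ^ 2 := mul_le_mul_of_nonneg_left hbq (div_nonneg (hf i) (hb i).le)
    _ = C ^ 2 * (f i / b i) := mul_comm _ _

theorem tendsto_nat_mul_sq_of_three_term_le (hb : ∀ n, 0 < b n) (hp : ∀ n, 0 ≤ p n)
    (hrec : ∀ n, b (n + 1) * p (n + 2) ≤ |a (n + 1)| * p (n + 1) + b n * p n)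
    (hα : Summable fun n => |a (n + 1)| / √(b (n + 1) * b n))
    (hreg : (∃ n0, ∀ n ≥ n0, (b (n + 1)) ^ 2 ≤ b n * b (n + 2)) ∨
            (∃ n0, ∀ n ≥ n0, b n * b (n + 2) ≤ (b (n + 1)) ^ 2))
    (hlim : Tendsto (fun n : ℕ => (n : ℝ) / b n) atTop (𝓝 0)) :
    Tendsto (fun n : ℕ => (n : ℝ) * p n ^ 2) atTop (𝓝 0) := by
  rcases hreg with ⟨N, hcv⟩ | ⟨N, hcc⟩
  · obtain ⟨C, hC⟩ := exists_sqrt_mul_succ_le_of_logConvex hb hp hrec hα hcv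
    have hlim' : Tendsto (fun n : ℕ => ((n : ℝ) + 1) / b n) atTop (𝓝 0) := by
      refine squeeze_zero' (Eventually.of_forall fun n => div_nonneg (by positivity) (hb n).le)
        ?_ (by simpa using hlim.const_mul 2)
      filter_upwards [eventually_ge_atTop 1] with n hn
      rw [mul_div_assoc']
      gcongr
      · exact (hb n).le
      · have : (1 : ℝ) ≤ n := by exact_mod_cast hn
        linarith
    have := tendsto_mul_sq_of_sqrt_mul_le (f := fun n : ℕ => (n : ℝ) + 1) (q := fun n => p (n + 1))
      hb (fun n => by positivity) (fun n => hp _) (eventually_atTop.2 ⟨N, hC⟩) hlim'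
    exact (tendsto_add_atTop_iff_nat 1).1 (by simpa using this)
  · obtain ⟨C, hC⟩ := exists_sqrt_mul_le_of_logConcave hb hp hrec hα hcc
    exact tendsto_mul_sq_of_sqrt_mul_le hb (fun n => n.cast_nonneg) hp
      (eventually_atTop.2 ⟨N, hC⟩) hlim

theorem three_term_norm_le {a b : ℕ → ℝ} (hb : ∀ n, 0 < b n) {F : ℕ → ℂ → ℂ}
    (hF : ∀ (n : ℕ) (z : ℂ), z * F (n + 1) z =
      (b (n + 1) : ℂ) * F (n + 2) z + (a (n + 1) : ℂ) * F (n + 1) z + (b n : ℂ) * F n z)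
    (n : ℕ) : b (n + 1) * ‖F (n + 2) 0‖ ≤ |a (n + 1)| * ‖F (n + 1) 0‖ + b n * ‖F n 0‖ := by
  have h : (b (n + 1) : ℂ) * F (n + 2) 0 = -((a (n + 1) : ℂ) * F (n + 1) 0 + (b n : ℂ) * F n 0) := by
    linear_combination -hF n 0
  calc b (n + 1) * ‖F (n + 2) 0‖ = ‖(a (n + 1) : ℂ) * F (n + 1) 0 + (b n : ℂ) * F n 0‖ := by
        rw [← norm_neg (_ + _), ← h, norm_mul, Complex.norm_real, Real.norm_of_nonneg (hb _).le]
    _ ≤ _ := (norm_add_le _ _).trans_eq <| by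
        rw [norm_mul, norm_mul, Complex.norm_real, Complex.norm_real, Real.norm_eq_abs,
          Real.norm_of_nonneg (hb n).le]

end ThreeTermInequality

theorem stmt_4_general (a b : ℕ → ℝ) (hb : ∀ n, 0 < b n)
    (P Q : ℕ → ℂ → ℂ)
    (hPrec : ∀ (n : ℕ) (z : ℂ), z * P (n+1) z =
      (b (n+1) : ℂ) * P (n+2) z + (a (n+1) : ℂ) * P (n+1) z + (b n : ℂ) * P n z)
    (hQrec : ∀ (n : ℕ) (z : ℂ), z * Q (n+1) z =
      (b (n+1) : ℂ) * Q (n+2) z + (a (n+1) : ℂ) * Q (n+1) z + (b n : ℂ) * Q n z)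
    (hBer : Summable (fun n : ℕ => (1 + |a (n+1)|) / Real.sqrt (b (n+1) * b n)))
    (hreg : (∃ n0, ∀ n ≥ n0, (b (n+1)) ^ 2 ≤ b n * b (n+2)) ∨
            (∃ n0, ∀ n ≥ n0, b n * b (n+2) ≤ (b (n+1)) ^ 2))
    :
    Filter.Tendsto (fun n : ℕ => (n : ℝ) / b n) Filter.atTop (nhds 0) ∧
    Filter.Tendsto (fun n : ℕ => (n : ℝ) * ‖P n 0‖ ^ 2) Filter.atTop (nhds 0) ∧
    Filter.Tendsto (fun n : ℕ => (n : ℝ) * ‖Q n 0‖ ^ 2) Filter.atTop (nhds 0) := by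
  have hc : Summable fun n => 1 / √(b (n + 1) * b n) :=
    hBer.of_nonneg_of_le (fun n => by positivity) fun n => by
      gcongr
      linarith [abs_nonneg (a (n + 1))]
  have hα : Summable fun n => |a (n + 1)| / √(b (n + 1) * b n) :=
    hBer.of_nonneg_of_le (fun n => by positivity) fun n => by gcongr; linarith
  obtain ⟨N, hmono⟩ := exists_monotoneOn_Ici_of_logConvex_or_logConcave hb hreg
    (not_isBoundedUnder_of_summable_inv_sqrt_mul hb hc)
  have hlim := tendsto_nat_div_of_summable_inv_sqrt_mul hb hmono hc
  exact ⟨hlim,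
    tendsto_nat_mul_sq_of_three_term_le hb (fun n => norm_nonneg _) (three_term_norm_le hb hPrec)
      hα hreg hlim,
    tendsto_nat_mul_sq_of_three_term_le hb (fun n => norm_nonneg _) (three_term_norm_le hb hQrec)
      hα hreg hlim⟩

/-- Berg–Szwarc, Corollary 3.4: under the Berezanskii conditions,
`1/b_n`, `P_n(0)²` and `Q_n(0)²` are all `o(1/n)`. -/
theorem stmt_4 (a b : ℕ → ℝ) (hb : ∀ n, 0 < b n)
    (P Q : ℕ → ℂ → ℂ)
    (hP0 : ∀ z : ℂ, P 0 z = 1) (hQ0 : ∀ z : ℂ, Q 0 z = 0)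
    (hPrec0 : ∀ z : ℂ, z * P 0 z = (b 0 : ℂ) * P 1 z + (a 0 : ℂ) * P 0 z)
    (hQrec0 : ∀ z : ℂ, z * Q 0 z = (b 0 : ℂ) * Q 1 z + (a 0 : ℂ) * Q 0 z - 1)
    (hPrec : ∀ (n : ℕ) (z : ℂ), z * P (n+1) z =
      (b (n+1) : ℂ) * P (n+2) z + (a (n+1) : ℂ) * P (n+1) z + (b n : ℂ) * P n z)
    (hQrec : ∀ (n : ℕ) (z : ℂ), z * Q (n+1) z =
      (b (n+1) : ℂ) * Q (n+2) z + (a (n+1) : ℂ) * Q (n+1) z + (b n : ℂ) * Q n z)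
    (hBer : Summable (fun n : ℕ => (1 + |a (n+1)|) / Real.sqrt (b (n+1) * b n)))
    (hreg : (∃ n0, ∀ n ≥ n0, (b (n+1)) ^ 2 ≤ b n * b (n+2)) ∨
            (∃ n0, ∀ n ≥ n0, b n * b (n+2) ≤ (b (n+1)) ^ 2))
    :
    Filter.Tendsto (fun n : ℕ => (n : ℝ) / b n) Filter.atTop (nhds 0) ∧
    Filter.Tendsto (fun n : ℕ => (n : ℝ) * ‖P n 0‖ ^ 2) Filter.atTop (nhds 0) ∧
    Filter.Tendsto (fun n : ℕ => (n : ℝ) * ‖Q n 0‖ ^ 2) Filter.atTop (nhds 0) :=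
  stmt_4_general a b hb P Q hPrec hQrec hBer hreg
end

section
/- Let α : (r_0, ∞) → (0, ∞) be an order function with dual function β, and let (u_n)_{n≥1} be positive real numbers with u_n → 0 and u_n < 1/r_0 for all n ≥ n_0. For r > 0 set N_r = #{n ≥ 1 : u_n ≥ 1/r}. Then: (a) if ∑_{n≥n_0} β(u_n) < ∞, then N_r = O(α(r)) as r → ∞; (b) if N_r = O(α(r)) as r → ∞, then ∑_{n≥n_0} β(u_n)^{1+ε} < ∞ for every ε > 0. -/
/-- An order function: a continuous, positive, increasing function `α` on `(r0, ∞)` tending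
to `∞`, such that `r / α(r)` is also increasing and tends to `∞`. -/
def IsOrderFunction (r0 : ℝ) (α : ℝ → ℝ) : Prop :=
  0 ≤ r0 ∧ ContinuousOn α (Set.Ioi r0) ∧ (∀ r ∈ Set.Ioi r0, 0 < α r) ∧
    StrictMonoOn α (Set.Ioi r0) ∧ Filter.Tendsto α Filter.atTop Filter.atTop ∧
    StrictMonoOn (fun r => r / α r) (Set.Ioi r0) ∧
    Filter.Tendsto (fun r => r / α r) Filter.atTop Filter.atTop


/-!
Write `v_n = α(1/u_n) = 1/β(u_n)`; for `n ≥ n0` and `r > r0`, monotonicity of `α` gives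
`u_n ≥ 1/r ↔ v_n ≤ α(r)`.

(a) is Markov's inequality: each of the indices `n ≥ n0` counted by `N_r` contributes at least
`1/α(r)` to `∑ β(u_n)`, so `N_r ≤ n0 + α(r) ∑ β(u_n)`.

(b) Since `α` is continuous and unbounded, every large `t` is a value `α(r)`, so the hypothesis
says `#{n : v_n ≤ t} = O(t)`. Sorting the `v_n` into dyadic blocks `2^k ≤ v_n < 2^(k+1)`, a
block has `O(2^k)` members, each contributing at most `2^(-k(1+ε))`; the blocks are therefore
dominated by a geometric series of ratio `2^(-ε)`.
-/

open Filter Topology Finset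

theorem finite_setOf_le_of_tendsto_zero {u : ℕ → ℝ} (hu0 : Tendsto u atTop (𝓝 0)) {c : ℝ}
    (hc : 0 < c) : {n | c ≤ u n}.Finite := by
  simpa [← Nat.cofinite_eq_atTop] using hu0.eventually (gt_mem_nhds hc)

theorem card_mul_le_tsum {ι : Type*} {f : ι → ℝ} (hf : ∀ i, 0 ≤ f i) (hsum : Summable f)
    {s : Finset ι} {c : ℝ} (hc : ∀ i ∈ s, c ≤ f i) : #s * c ≤ ∑' i, f i :=
  calc #s * c = ∑ _i ∈ s, c := by simp
    _ ≤ ∑ i ∈ s, f i := sum_le_sum hc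
    _ ≤ ∑' i, f i := hsum.sum_le_tsum s fun i _ => hf i

theorem card_le_add_card_filter_le (s : Finset ℕ) (n₀ : ℕ) :
    #s ≤ n₀ + #(s.filter (n₀ ≤ ·)) := by
  rw [← card_filter_add_card_filter_not (n₀ ≤ ·), add_comm]
  gcongr
  simpa using card_le_card (t := range n₀) fun n hn => by simpa using (mem_filter.1 hn).2

theorem summable_of_sum_fiber_le {ι κ : Type*} {f : ι → ℝ} (hf : ∀ i, 0 ≤ f i) (g : ι → κ)
    {b : κ → ℝ} (hb : Summable b)
    (hfiber : ∀ k (s : Finset ι), (∀ i ∈ s, g i = k) → ∑ i ∈ s, f i ≤ b k) : Summable f := by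
  classical
  have hb0 : ∀ k, 0 ≤ b k := fun k => by simpa using hfiber k ∅
  refine summable_of_sum_le (c := ∑' k, b k) hf fun s => ?_
  rw [← sum_fiberwise_of_maps_to fun i hi => mem_image_of_mem g hi]
  calc ∑ k ∈ s.image g, ∑ i ∈ s with g i = k, f i ≤ ∑ k ∈ s.image g, b k :=
        sum_le_sum fun k _ => hfiber k _ fun i hi => (mem_filter.1 hi).2
    _ ≤ ∑' k, b k := hb.sum_le_tsum _ fun k _ => hb0 k

theorem two_pow_log_floor_le_and_lt {x : ℝ} (hx : 1 ≤ x) :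
    (2 : ℝ) ^ Nat.log 2 ⌊x⌋₊ ≤ x ∧ x < 2 ^ (Nat.log 2 ⌊x⌋₊ + 1) := by
  have hfloor : ⌊x⌋₊ ≠ 0 := (Nat.floor_pos.2 hx).ne'
  constructor
  · calc (2 : ℝ) ^ Nat.log 2 ⌊x⌋₊ ≤ ⌊x⌋₊ := by exact_mod_cast Nat.pow_log_le_self 2 hfloor
      _ ≤ x := Nat.floor_le (by linarith)
  · calc x < ⌊x⌋₊ + 1 := Nat.lt_floor_add_one x
      _ ≤ 2 ^ (Nat.log 2 ⌊x⌋₊ + 1) := by exact_mod_cast Nat.lt_pow_succ_log_self one_lt_two _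

theorem summable_inv_rpow_of_card_le {ι : Type*} {v : ι → ℝ} {C T p s : ℝ} (hT : 1 ≤ T)
    (hvT : ∀ i, T ≤ v i) (hp : 0 ≤ p) (hps : p < s)
    (hcard : ∀ t, T ≤ t → ∀ F : Finset ι, (∀ i ∈ F, v i ≤ t) → (#F : ℝ) ≤ C * t ^ p) :
    Summable fun i => (v i)⁻¹ ^ s := by
  set q : ℝ := 2 ^ p / 2 ^ s
  have hq1 : q < 1 :=
    (div_lt_one (by positivity)).2 (Real.rpow_lt_rpow_of_exponent_lt one_lt_two hps)
  have hC : 0 ≤ C := by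
    have := hcard T le_rfl ∅ (by simp)
    simp only [card_empty, Nat.cast_zero] at this
    exact (mul_nonneg_iff_of_pos_right (by positivity)).1 this
  set level : ι → ℕ := fun i => Nat.log 2 ⌊v i⌋₊
  have hlevel : ∀ i, (2 : ℝ) ^ level i ≤ v i ∧ v i < 2 ^ (level i + 1) := fun i =>
    two_pow_log_floor_le_and_lt (hT.trans (hvT i))
  have hv : ∀ i, 0 < v i := fun i => by linarith [hvT i]
  refine summable_of_sum_fiber_le (fun i => Real.rpow_nonneg (inv_nonneg.2 (hv i).le) s) level
    ((summable_geometric_of_lt_one (by positivity) hq1).mul_left (C * 2 ^ p)) fun k F hF => ?_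
  have hcardF : (#F : ℝ) ≤ C * ((2 : ℝ) ^ (k + 1)) ^ p := by
    rcases F.eq_empty_or_nonempty with rfl | ⟨i, hi⟩
    · simp only [card_empty, Nat.cast_zero]; positivity
    refine hcard _ ((hvT i).trans (hF i hi ▸ (hlevel i).2.le)) F fun j hj => ?_
    exact hF j hj ▸ (hlevel j).2.le
  calc ∑ i ∈ F, (v i)⁻¹ ^ s ≤ ∑ _i ∈ F, (((2 : ℝ) ^ k)⁻¹) ^ s := by
        refine sum_le_sum fun i hi => ?_
        have := hv i
        gcongr
        · linarith
        · exact hF i hi ▸ (hlevel i).1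
    _ = #F * (((2 : ℝ) ^ k)⁻¹) ^ s := by simp
    _ ≤ C * ((2 : ℝ) ^ (k + 1)) ^ p * (((2 : ℝ) ^ k)⁻¹) ^ s := by gcongr
    _ = C * 2 ^ p * q ^ k := by
        rw [Real.inv_rpow (by positivity), ← Real.rpow_pow_comm (by norm_num),
          ← Real.rpow_pow_comm (by norm_num), div_pow]
        ring

section OrderFunction

variable {r0 : ℝ} {α : ℝ → ℝ}

theorem IsOrderFunction.inv_le_iff_apply_inv_le (hα : IsOrderFunction r0 α) {x r : ℝ}
    (hx : 0 < x) (hxr0 : r0 < x⁻¹) (hr : r0 < r) : r⁻¹ ≤ x ↔ α x⁻¹ ≤ α r := by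
  have ⟨hr0, _, _, hmono, _⟩ := hα
  rw [hmono.le_iff_le hxr0 hr, inv_le_comm₀ (hr0.trans_lt hr) hx]

theorem IsOrderFunction.exists_ge_apply_eq (hα : IsOrderFunction r0 α) {R : ℝ} (hR : r0 < R)
    {t : ℝ} (ht : α R ≤ t) : ∃ r, R ≤ r ∧ α r = t := by
  have ⟨_, hcont, _, _, htop, _⟩ := hα
  exact intermediate_value_Ici (hcont.mono fun _ hx => hR.trans_le hx) htop ht

variable {u : ℕ → ℝ} {n0 : ℕ}

theorem IsOrderFunction.card_le_mul_of_summable (hα : IsOrderFunction r0 α)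
    (hu : ∀ n, 0 < u n) (hu0 : Tendsto u atTop (𝓝 0)) (hdom : ∀ n ≥ n0, r0 < (u n)⁻¹)
    (hsum : Summable fun n => (α (u n)⁻¹)⁻¹) :
    ∃ C R : ℝ, 0 < C ∧ ∀ r : ℝ, R ≤ r → (Nat.card {n : ℕ | r⁻¹ ≤ u n} : ℝ) ≤ C * α r := by
  have ⟨hr0, _, hpos, _, htop, _⟩ := hα
  -- for `n < n0` the value `α (u n)⁻¹` lies outside the domain of `α`
  set f := {n | n0 ≤ n}.indicator fun n => (α (u n)⁻¹)⁻¹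
  have hf : ∀ n, 0 ≤ f n :=
    Set.indicator_nonneg fun n hn => (inv_pos.2 (hpos _ (hdom n hn))).le
  set S := ∑' n, f n
  have hS : 0 ≤ S := tsum_nonneg hf
  obtain ⟨R0, hR0⟩ := eventually_atTop.1 (htop.eventually_ge_atTop 1)
  refine ⟨n0 + S + 1, max R0 (r0 + 1), by positivity, fun r hr => ?_⟩
  have hr0r : r0 < r := by linarith [le_max_right R0 (r0 + 1)]
  have hαr : 1 ≤ α r := hR0 r (le_of_max_le_left hr)
  have hfin := finite_setOf_le_of_tendsto_zero hu0 (inv_pos.2 (hr0.trans_lt hr0r))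
  set F := hfin.toFinset
  have hmarkov : (#(F.filter (n0 ≤ ·)) : ℝ) * (α r)⁻¹ ≤ S := by
    refine card_mul_le_tsum hf (hsum.indicator _) fun n hn => ?_
    obtain ⟨hnF, hn⟩ := mem_filter.1 hn
    rw [show f n = (α (u n)⁻¹)⁻¹ from Set.indicator_of_mem hn _]
    exact inv_anti₀ (hpos _ (hdom n hn))
      ((hα.inv_le_iff_apply_inv_le (hu n) (hdom n hn) hr0r).1 (hfin.mem_toFinset.1 hnF))
  calc (Nat.card {n : ℕ | r⁻¹ ≤ u n} : ℝ) = #F := by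
        rw [Nat.card_eq_card_finite_toFinset hfin]
    _ ≤ n0 + #(F.filter (n0 ≤ ·)) := by exact_mod_cast card_le_add_card_filter_le F n0
    _ ≤ n0 * α r + S * α r := by
        gcongr
        · exact le_mul_of_one_le_right (by positivity) hαr
        · exact (mul_inv_le_iff₀ (hpos r hr0r)).1 hmarkov
    _ ≤ (n0 + S + 1) * α r := by linarith

theorem IsOrderFunction.summable_rpow_of_card_le_mul (hα : IsOrderFunction r0 α)
    (hu : ∀ n, 0 < u n) (hu0 : Tendsto u atTop (𝓝 0)) (hdom : ∀ n ≥ n0, r0 < (u n)⁻¹)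
    {C R : ℝ} (hcount : ∀ r : ℝ, R ≤ r → (Nat.card {n : ℕ | r⁻¹ ≤ u n} : ℝ) ≤ C * α r)
    {ε : ℝ} (hε : 0 < ε) : Summable fun n => (α (u n)⁻¹)⁻¹ ^ (1 + ε) := by
  have ⟨hr0, _, _, _, htop, _⟩ := hα
  set R' := max R (r0 + 1)
  have hR' : r0 < R' := lt_max_of_lt_right (lt_add_one r0)
  have hv : Tendsto (fun n => α (u n)⁻¹) atTop atTop :=
    htop.comp (tendsto_inv_nhdsGT_zero.comp
      (tendsto_nhdsWithin_iff.2 ⟨hu0, Eventually.of_forall hu⟩))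
  obtain ⟨n1, hn1⟩ := eventually_atTop.1
    ((hv.eventually_ge_atTop (max (α R') 1)).and (eventually_ge_atTop n0))
  refine (summable_nat_add_iff n1).1 <| summable_inv_rpow_of_card_le
    (v := fun m => α (u (m + n1))⁻¹) (C := C) (le_max_right _ _)
    (fun m => (hn1 (m + n1) le_add_self).1) zero_le_one (lt_add_of_pos_right 1 hε)
    fun t ht F hF => ?_
  obtain ⟨r, hR'r, rfl⟩ := hα.exists_ge_apply_eq hR' (le_of_max_le_left ht)
  have hr0r : r0 < r := hR'.trans_le hR'r
  have hfin := finite_setOf_le_of_tendsto_zero hu0 (inv_pos.2 (hr0.trans_lt hr0r))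
  have hsub : F.map (addRightEmbedding n1) ⊆ hfin.toFinset := by
    intro n hn
    obtain ⟨m, hm, rfl⟩ := mem_map.1 hn
    have hn0 := (hn1 (m + n1) le_add_self).2
    exact hfin.mem_toFinset.2
      ((hα.inv_le_iff_apply_inv_le (hu _) (hdom _ hn0) hr0r).2 (hF m hm))
  calc (#F : ℝ) = #(F.map (addRightEmbedding n1)) := by rw [card_map]
    _ ≤ #hfin.toFinset := by exact_mod_cast card_le_card hsub
    _ = Nat.card {n : ℕ | r⁻¹ ≤ u n} := by rw [Nat.card_eq_card_finite_toFinset hfin]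
    _ ≤ C * α r := hcount r (le_of_max_le_left hR'r)
    _ = C * α r ^ (1 : ℝ) := by rw [Real.rpow_one]

end OrderFunction

/-- Berg–Szwarc, Lemma 4.7: for an order function `α` with dual `β` and positive `u_n → 0`
with `u_n < 1/r0` eventually, setting `N_r = #{n : u_n ≥ 1/r}`:
(a) `∑ β(u_n) < ∞` implies `N_r = O(α(r))`;
(b) `N_r = O(α(r))` implies `∑ β(u_n)^{1+ε} < ∞` for every `ε > 0`. -/
theorem stmt_9 (r0 : ℝ) (α : ℝ → ℝ) (hα : IsOrderFunction r0 α)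
    (u : ℕ → ℝ) (hu : ∀ n, 0 < u n)
    (hu0 : Filter.Tendsto u Filter.atTop (nhds 0))
    (n0 : ℕ) (hdom : ∀ n ≥ n0, r0 < (u n)⁻¹) :
    (Summable (fun n => (α (u n)⁻¹)⁻¹) →
      ∃ C R : ℝ, 0 < C ∧ ∀ r : ℝ, R ≤ r →
        (Nat.card {n : ℕ | r⁻¹ ≤ u n} : ℝ) ≤ C * α r) ∧
    ((∃ C R : ℝ, 0 < C ∧ ∀ r : ℝ, R ≤ r →
        (Nat.card {n : ℕ | r⁻¹ ≤ u n} : ℝ) ≤ C * α r) →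
      ∀ ε : ℝ, 0 < ε → Summable (fun n => ((α (u n)⁻¹)⁻¹) ^ (1 + ε))) :=
  ⟨hα.card_le_mul_of_summable hu hu0 hdom, fun ⟨_, _, _, hcount⟩ _ hε =>
    hα.summable_rpow_of_card_le_mul hu hu0 hdom hcount hε⟩
end

section
/- Let α : (r_0, ∞) → (0, ∞) be an order function with dual function β, and let (u_n)_{n≥1} be positive real numbers with u_n → 0, u_n < 1/r_0 for all n ≥ n_0, and ∑_{n≥n_0} β(u_n) < ∞. Then log ∏_{n=1}^∞ (1 + r·u_n) = O(α(r)·log r) as r → ∞; in particular the entire function f(z) = ∏_{n=1}^∞ (1 + z·u_n) has order bounded by α, i.e. there exists K > 0 with M_f(r) ≤ r^{K·α(r)} for all sufficiently large r. -/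
open Filter Topology

noncomputable def dualOrderFunction (α : ℝ → ℝ) (s : ℝ) : ℝ := (α s⁻¹)⁻¹

theorem Real.log_one_add_mul_le_two_mul_log {r u : ℝ} (hu : 0 ≤ u) (hur : u + 1 ≤ r) :
    Real.log (1 + r * u) ≤ 2 * Real.log r := by
  have hr : 1 ≤ r := by linarith
  rw [← Real.log_rpow (by linarith), Real.rpow_two]
  exact Real.log_le_log (by positivity) (by nlinarith)

theorem Real.exp_tsum_log_one_add {ι : Type*} {f : ι → ℝ} (hf : ∀ i, 0 ≤ f i)
    (hs : Summable f) : Real.exp (∑' i, Real.log (1 + f i)) = ∏' i, (1 + f i) :=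
  Real.rexp_tsum_eq_tprod (fun i => by linarith [hf i]) (Real.summable_log_one_add_of_summable hs)

theorem Filter.Tendsto.inv_atTop_of_pos {ι : Type*} {l : Filter ι} {u : ι → ℝ}
    (hu : ∀ i, 0 < u i) (hu0 : Tendsto u l (𝓝 0)) : Tendsto (fun i => (u i)⁻¹) l atTop :=
  (tendsto_nhdsWithin_iff.2 ⟨hu0, .of_forall hu⟩).inv_tendsto_nhdsGT_zero

theorem norm_tprod_one_add_le {ι R : Type*} [NormedCommRing R] [NormOneClass R] [NormMulClass R]
    [CompleteSpace R] {f : ι → R} {g : ι → ℝ} (hfg : ∀ i, ‖f i‖ ≤ g i) (hg : Summable g) :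
    ‖∏' i, (1 + f i)‖ ≤ ∏' i, (1 + g i) := by
  have hf : Summable (‖f ·‖) := hg.of_nonneg_of_le (fun i => norm_nonneg _) hfg
  refine le_of_tendsto_of_tendsto' (multipliable_one_add_of_summable hf).hasProd.norm
    (Real.multipliable_one_add_of_summable hg).hasProd fun s => ?_
  refine Finset.prod_le_prod (fun i _ => norm_nonneg _) fun i _ => ?_
  calc ‖1 + f i‖ ≤ ‖(1 : R)‖ + ‖f i‖ := norm_add_le _ _
    _ ≤ 1 + g i := by rw [norm_one]; linarith [hfg i]

namespace IsOrderFunction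

variable {r0 : ℝ} {α : ℝ → ℝ}

theorem pos (hα : IsOrderFunction r0 α) {r : ℝ} (hr : r0 < r) : 0 < α r := hα.2.2.1 r hr

theorem dual_pos (hα : IsOrderFunction r0 α) {u : ℝ} (hu : r0 < u⁻¹) :
    0 < dualOrderFunction α u :=
  inv_pos.2 (hα.pos hu)

theorem mul_le_mul_dual (hα : IsOrderFunction r0 α) {r u : ℝ} (hr : r0 < r) (hu : 0 < u)
    (hru : r ≤ u⁻¹) :
    r * u ≤ α r * dualOrderFunction α u := by
  have hαu := hα.pos (hr.trans_le hru)
  have hdiv : MonotoneOn (fun r => r / α r) (Set.Ioi r0) := hα.2.2.2.2.2.1.monotoneOn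
  have hq : r / α r ≤ u⁻¹ / α u⁻¹ := hdiv hr (hr.trans_le hru) hru
  rw [div_le_div_iff₀ (hα.pos hr) hαu] at hq
  rw [dualOrderFunction, ← div_eq_mul_inv, le_div_iff₀ hαu]
  calc r * u * α u⁻¹ = u * (r * α u⁻¹) := by ring
    _ ≤ u * (u⁻¹ * α r) := mul_le_mul_of_nonneg_left hq hu.le
    _ = α r := by field_simp

theorem one_le_mul_dual (hα : IsOrderFunction r0 α) {r u : ℝ} (hu : r0 < u⁻¹) (hur : u⁻¹ ≤ r) :
    1 ≤ α r * dualOrderFunction α u := by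
  have hmono : MonotoneOn α (Set.Ioi r0) := hα.2.2.2.1.monotoneOn
  rw [dualOrderFunction, ← div_eq_mul_inv, one_le_div (hα.pos hu)]
  exact hmono hu (hu.trans_le hur) hur

/-- For `1 / u ≤ r` the logarithm is at most `2 log r` while `α(r) β(u) ≥ 1`; for `r < 1 / u`
it is at most `r u ≤ α(r) β(u)` while `2 log r ≥ 1`. -/
theorem log_one_add_mul_le (hα : IsOrderFunction r0 α) {r u : ℝ} (hr : r0 < r) (hr2 : 2 ≤ r)
    (hu : 0 < u) (hur : u + 1 ≤ r) (hur0 : r0 < u⁻¹) :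
    Real.log (1 + r * u) ≤ 2 * Real.log r * (α r * dualOrderFunction α u) := by
  have hlog : 1 ≤ 2 * Real.log r := by
    have := Real.log_two_gt_d9
    linarith [Real.log_le_log two_pos hr2]
  rcases le_or_gt u⁻¹ r with hle | hlt
  · calc Real.log (1 + r * u) ≤ 2 * Real.log r := Real.log_one_add_mul_le_two_mul_log hu.le hur
      _ ≤ 2 * Real.log r * (α r * dualOrderFunction α u) :=
        le_mul_of_one_le_right (by linarith) (hα.one_le_mul_dual hur0 hle)
  · calc Real.log (1 + r * u) ≤ r * u := by
          linarith [Real.log_le_sub_one_of_pos (by positivity : 0 < 1 + r * u)]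
      _ ≤ α r * dualOrderFunction α u := hα.mul_le_mul_dual hr hu hlt.le
      _ ≤ 2 * Real.log r * (α r * dualOrderFunction α u) :=
        le_mul_of_one_le_left (mul_nonneg (hα.pos hr).le (hα.dual_pos hur0).le) hlog

theorem summable_of_summable_dual (hα : IsOrderFunction r0 α) {u : ℕ → ℝ} (hu : ∀ n, 0 < u n)
    (hu0 : Tendsto u atTop (𝓝 0)) (hβ : Summable fun n => dualOrderFunction α (u n)) :
    Summable u := by
  have hr1 : 0 < r0 + 1 := by linarith [hα.1]
  refine (hβ.mul_left (α (r0 + 1) / (r0 + 1))).of_norm_bounded_eventually ?_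
  rw [Nat.cofinite_eq_atTop]
  filter_upwards [(hu0.inv_atTop_of_pos hu).eventually_ge_atTop (r0 + 1)] with n hn
  rw [Real.norm_of_nonneg (hu n).le, div_mul_eq_mul_div, le_div_iff₀ hr1, mul_comm]
  exact hα.mul_le_mul_dual (lt_add_one r0) (hu n) hn

theorem exists_tsum_log_one_add_mul_le (hα : IsOrderFunction r0 α) {u : ℕ → ℝ}
    (hu : ∀ n, 0 < u n) (hu0 : Tendsto u atTop (𝓝 0))
    (hβ : Summable fun n => dualOrderFunction α (u n)) :
    ∃ C, 0 < C ∧ ∀ᶠ r in atTop, ∑' n, Real.log (1 + r * u n) ≤ C * (α r * Real.log r) := by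
  obtain ⟨N, hN⟩ := eventually_atTop.1 ((hu0.inv_atTop_of_pos hu).eventually_gt_atTop r0)
  have hNn (n : ℕ) : r0 < (u (n + N))⁻¹ := hN _ (Nat.le_add_left N n)
  obtain ⟨B, hB⟩ := hu0.bddAbove_range
  have hβN : Summable fun n => dualOrderFunction α (u (n + N)) := (summable_nat_add_iff N).2 hβ
  set S := ∑' n, dualOrderFunction α (u (n + N))
  have hS : 0 < S :=
    hβN.tsum_pos (fun n => (hα.dual_pos (hNn n)).le) 0 (hα.dual_pos (hNn 0))
  refine ⟨2 * (N + S), by positivity, ?_⟩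
  filter_upwards [eventually_gt_atTop r0, eventually_ge_atTop 2, eventually_ge_atTop (B + 1),
    (hα.2.2.2.2.1 : Tendsto α atTop atTop).eventually_ge_atTop 1] with r hr0 hr2 hrB hαr
  have hur (n : ℕ) : u n + 1 ≤ r := by linarith [hB ⟨n, rfl⟩]
  have hsum : Summable fun n => Real.log (1 + r * u n) :=
    Real.summable_log_one_add_of_summable ((hα.summable_of_summable_dual hu hu0 hβ).mul_left r)
  have head : ∑ n ∈ Finset.range N, Real.log (1 + r * u n) ≤ N * (2 * Real.log r) := by
    simpa using Finset.sum_le_card_nsmul (Finset.range N) _ _ fun n _ =>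
      Real.log_one_add_mul_le_two_mul_log (hu n).le (hur n)
  have tail : ∑' n, Real.log (1 + r * u (n + N)) ≤ 2 * Real.log r * (α r * S) := by
    rw [← tsum_mul_left, ← tsum_mul_left]
    exact ((summable_nat_add_iff N).2 hsum).tsum_le_tsum
      (fun n => hα.log_one_add_mul_le hr0 hr2 (hu _) (hur _) (hNn n))
      ((hβN.mul_left _).mul_left _)
  have hlog : 0 ≤ Real.log r := Real.log_nonneg (by linarith)
  rw [← hsum.sum_add_tsum_nat_add N]
  calc _ ≤ N * (2 * Real.log r) + 2 * Real.log r * (α r * S) := add_le_add head tail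
    _ ≤ 2 * (N + S) * (α r * Real.log r) := by
      nlinarith [mul_nonneg (mul_nonneg (Nat.cast_nonneg N : (0 : ℝ) ≤ N) hlog) (sub_nonneg.2 hαr)]

end IsOrderFunction

theorem stmt_10_general (r0 : ℝ) (α : ℝ → ℝ) (hα : IsOrderFunction r0 α)
    (u : ℕ → ℝ) (hu : ∀ n, 0 < u n)
    (hu0 : Filter.Tendsto u Filter.atTop (nhds 0))
    (hβ : Summable (fun n => (α (u n)⁻¹)⁻¹)) :
    (∃ C : ℝ, 0 < C ∧ ∀ᶠ r : ℝ in Filter.atTop,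
      Real.log (∏' n : ℕ, (1 + r * u n)) ≤ C * (α r * Real.log r)) ∧
    (∃ K : ℝ, 0 < K ∧ ∀ᶠ r : ℝ in Filter.atTop,
      sSup ((fun z : ℂ => ‖∏' n : ℕ, (1 + z * (u n : ℂ))‖) ''
          Metric.closedBall (0 : ℂ) r) ≤ r ^ (K * α r)) := by
  have hsu : Summable u := hα.summable_of_summable_dual hu hu0 hβ
  have hexp (r : ℝ) (hr : 0 ≤ r) :
      Real.exp (∑' n, Real.log (1 + r * u n)) = ∏' n, (1 + r * u n) :=
    Real.exp_tsum_log_one_add (fun n => mul_nonneg hr (hu n).le) (hsu.mul_left r)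
  obtain ⟨C, hC, hbound⟩ := hα.exists_tsum_log_one_add_mul_le hu hu0 hβ
  have hlog : ∀ᶠ r : ℝ in atTop, Real.log (∏' n, (1 + r * u n)) ≤ C * (α r * Real.log r) := by
    filter_upwards [hbound, eventually_ge_atTop 0] with r hr hr0
    rwa [← hexp r hr0, Real.log_exp]
  refine ⟨⟨C, hC, hlog⟩, C, hC, ?_⟩
  filter_upwards [hbound, eventually_gt_atTop 0] with r hr hr0
  have hprod : ∏' n, (1 + r * u n) ≤ r ^ (C * α r) := by
    rw [← hexp r hr0.le, Real.rpow_def_of_pos hr0, Real.exp_le_exp]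
    linarith
  refine Real.sSup_le ?_ (Real.rpow_nonneg hr0.le _)
  rintro _ ⟨z, hz, rfl⟩
  refine (norm_tprod_one_add_le (fun n => ?_) (hsu.mul_left r)).trans hprod
  rw [norm_mul, Complex.norm_real, Real.norm_of_nonneg (hu n).le]
  exact mul_le_mul_of_nonneg_right (mem_closedBall_zero_iff.1 hz) (hu n).le

/-- Berg–Szwarc, Proposition 4.9: for an order function `α` with dual `β` and positive
`u_n → 0` with `u_n < 1/r0` eventually and `∑ β(u_n) < ∞`, one has
`log ∏ (1 + r·u_n) = O(α(r)·log r)`; in particular the entire function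
`f(z) = ∏ (1 + z·u_n)` has order bounded by `α`. -/
theorem stmt_10 (r0 : ℝ) (α : ℝ → ℝ) (hα : IsOrderFunction r0 α)
    (u : ℕ → ℝ) (hu : ∀ n, 0 < u n)
    (hu0 : Filter.Tendsto u Filter.atTop (nhds 0))
    (n0 : ℕ) (hdom : ∀ n ≥ n0, r0 < (u n)⁻¹)
    (hβ : Summable (fun n => (α (u n)⁻¹)⁻¹)) :
    (∃ C : ℝ, 0 < C ∧ ∀ᶠ r : ℝ in Filter.atTop,
      Real.log (∏' n : ℕ, (1 + r * u n)) ≤ C * (α r * Real.log r)) ∧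
    (∃ K : ℝ, 0 < K ∧ ∀ᶠ r : ℝ in Filter.atTop,
      sSup ((fun z : ℂ => ‖∏' n : ℕ, (1 + z * (u n : ℂ))‖) ''
          Metric.closedBall (0 : ℂ) r) ≤ r ^ (K * α r)) :=
  stmt_10_general r0 α hα u hu hu0 hβ
end

section
/- Let μ be a probability measure on ℝ with infinite support and finite moments s_n = ∫ x^n dμ(x) of all orders, and let (P_n)_{n≥0} be the orthonormal polynomials of μ: P_n is a real polynomial of degree n with positive leading coefficient b_{n,n}, and ∫ P_m(x) P_n(x) dμ(x) = δ_{mn}. Write P_n(x) = ∑_{k=0}^n b_{k,n} x^k and assume c_n := (∑_{m=n}^∞ b_{n,m}²)^{1/2} < ∞ for every n (which holds when the moment problem is indeterminate). Then: (i) 1 ≤ s_{2n}·b_{n,n}² ≤ c_n²·s_{2n} for all n ≥ 0; (ii) for every r ≥ 0, ∑_{n=0}^∞ r^n/√(s_{2n}) ≤ ∑_{n=0}^∞ b_{n,n} r^n ≤ ∑_{n=0}^∞ c_n r^n, as an inequality of sums in [0,∞]; in particular, whenever the right-hand series converges, the maximum moduli of the entire functions L(z) = ∑ z^n/√(s_{2n}),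 H(z) = ∑ b_{n,n} z^n and Φ(z) = ∑ c_n z^n satisfy M_L(r) ≤ M_H(r) ≤ M_Φ(r). -/
/-!
Let `L` be the moment functional `p ↦ ∫ p dμ`. The polynomial `q = xⁿ - b_{n,n}⁻¹ Pₙ` has degree
`< n`, hence is `L`-orthogonal to `Pₙ`, and Pythagoras gives
`s_{2n} = L(x²ⁿ) = b_{n,n}⁻² + L(q²) ≥ b_{n,n}⁻²`. On the other side `b_{n,n}²` is the first term
of the series defining `c_n²`. So `1/√s_{2n} ≤ b_{n,n} ≤ c_n`, and (ii) follows by comparing the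
series termwise.
-/

open MeasureTheory Polynomial

namespace Polynomial

noncomputable def momentFunctional (s : ℕ → ℝ) : ℝ[X] →ₗ[ℝ] ℝ :=
  lsum fun n => s n • LinearMap.id

lemma momentFunctional_X_pow (s : ℕ → ℝ) (n : ℕ) : momentFunctional s (X ^ n) = s n := by
  simp [momentFunctional, X_pow_eq_monomial]

lemma momentFunctional_apply (s : ℕ → ℝ) (p : ℝ[X]) :
    momentFunctional s p = ∑ k ∈ Finset.range (p.natDegree + 1), p.coeff k * s k := by
  rw [momentFunctional, lsum_apply, sum_over_range]
  · simp [mul_comm]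
  · simp

namespace Sequence

variable {L : ℝ[X] →ₗ[ℝ] ℝ} {S : Sequence ℝ}
  (horth : ∀ m n, L (S m * S n) = if m = n then 1 else 0)
include horth

lemma map_mul_eq_zero_of_degree_lt {n : ℕ} {q : ℝ[X]} (hq : q.degree < n) :
    L (q * S n) = 0 := by
  have hspan : q ∈ Submodule.span ℝ (S '' Set.Iio n) := by
    rw [S.span_degreeLT fun i _ => (leadingCoeff_ne_zero.mpr (S.ne_zero i)).isUnit]
    exact mem_degreeLT.mpr hq
  suffices Submodule.span ℝ (S '' Set.Iio n) ≤ LinearMap.ker (L ∘ₗ LinearMap.mulRight ℝ (S n))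
    from this hspan
  rw [Submodule.span_le]
  rintro _ ⟨m, hm, rfl⟩
  simp [horth, (Set.mem_Iio.mp hm).ne]

omit horth in
lemma degree_X_pow_sub_C_inv_leadingCoeff_mul_lt (n : ℕ) :
    (X ^ n - C (S n).leadingCoeff⁻¹ * S n).degree < (n : WithBot ℕ) := by
  have hb : (S n).leadingCoeff ≠ 0 := leadingCoeff_ne_zero.mpr (S.ne_zero n)
  have hlc : (C (S n).leadingCoeff⁻¹ * S n).leadingCoeff = 1 := by
    rw [leadingCoeff_mul, leadingCoeff_C, inv_mul_cancel₀ hb]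
  have hdeg : (C (S n).leadingCoeff⁻¹ * S n).degree = n := by
    rw [degree_C_mul (inv_ne_zero hb), S.degree_eq]
  have h := degree_sub_lt_left (p := X ^ n) (q := C (S n).leadingCoeff⁻¹ * S n)
    (by rw [degree_X_pow, hdeg]) (pow_ne_zero n X_ne_zero) (by rw [leadingCoeff_X_pow, hlc])
  rwa [degree_X_pow] at h

lemma map_X_pow_two_mul (n : ℕ) :
    L (X ^ (2 * n)) = (S n).leadingCoeff⁻¹ ^ 2 +
      L ((X ^ n - C (S n).leadingCoeff⁻¹ * S n) * (X ^ n - C (S n).leadingCoeff⁻¹ * S n)) := by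
  set a := (S n).leadingCoeff⁻¹
  set q := X ^ n - C a * S n
  have hX : (X ^ (2 * n) : ℝ[X]) = a ^ 2 • (S n * S n) + (2 * a) • (q * S n) + q * q := by
    simp only [smul_eq_C_mul, q, C_mul, C_pow, C_ofNat]
    ring
  rw [hX, map_add, map_add, map_smul, map_smul, horth, if_pos rfl,
    map_mul_eq_zero_of_degree_lt horth (degree_X_pow_sub_C_inv_leadingCoeff_mul_lt n)]
  simp

lemma one_le_map_X_pow_mul_leadingCoeff_sq (hpos : ∀ q, 0 ≤ L (q * q)) (n : ℕ) :
    1 ≤ L (X ^ (2 * n)) * (S n).leadingCoeff ^ 2 := by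
  have hb : (S n).leadingCoeff ≠ 0 := leadingCoeff_ne_zero.mpr (S.ne_zero n)
  rw [map_X_pow_two_mul horth, add_mul, inv_pow, inv_mul_cancel₀ (pow_ne_zero 2 hb)]
  have := hpos (X ^ n - C (S n).leadingCoeff⁻¹ * S n)
  nlinarith [sq_nonneg (S n).leadingCoeff]

end Sequence

end Polynomial

lemma integral_eval_eq_momentFunctional {μ : Measure ℝ}
    (hint : ∀ n : ℕ, Integrable (fun x => x ^ n) μ) (p : ℝ[X]) :
    ∫ x, p.eval x ∂μ = momentFunctional (fun n => ∫ x, x ^ n ∂μ) p := by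
  simp_rw [momentFunctional_apply, eval_eq_sum_range, ← integral_const_mul]
  exact integral_finsetSum _ fun k _ => (hint k).const_mul _

lemma one_le_integral_pow_mul_leadingCoeff_sq {μ : Measure ℝ}
    (hint : ∀ n : ℕ, Integrable (fun x => x ^ n) μ) {S : Sequence ℝ}
    (horth : ∀ m n, ∫ x, (S m).eval x * (S n).eval x ∂μ = if m = n then 1 else 0) (n : ℕ) :
    1 ≤ (∫ x, x ^ (2 * n) ∂μ) * (S n).leadingCoeff ^ 2 := by
  set L := momentFunctional fun k => ∫ x, x ^ k ∂μ
  have hLorth : ∀ m n, L (S m * S n) = if m = n then 1 else 0 := fun m n => by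
    rw [← integral_eval_eq_momentFunctional hint, ← horth]
    simp only [eval_mul]
  have hLpos : ∀ q, 0 ≤ L (q * q) := fun q => by
    rw [← integral_eval_eq_momentFunctional hint]
    simp only [eval_mul]
    exact integral_nonneg fun x => mul_self_nonneg _
  simpa only [L, momentFunctional_X_pow] using
    S.one_le_map_X_pow_mul_leadingCoeff_sq hLorth hLpos n

lemma inv_sqrt_le_of_one_le_mul_sq {s b : ℝ} (hb : 0 ≤ b) (h : 1 ≤ s * b ^ 2) : (√s)⁻¹ ≤ b := by
  have hs : 0 < s := by
    by_contra! hs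
    nlinarith [mul_nonpos_of_nonpos_of_nonneg hs (sq_nonneg b)]
  rw [inv_le_iff_one_le_mul₀' (Real.sqrt_pos.mpr hs), ← Real.sqrt_sq hb, ← Real.sqrt_mul hs.le]
  exact Real.one_le_sqrt.mpr h

lemma tsum_le_tsum_of_nonneg {f g : ℕ → ℝ} (hf : ∀ n, 0 ≤ f n) (hfg : ∀ n, f n ≤ g n)
    (hg : Summable g) : ∑' n, f n ≤ ∑' n, g n :=
  (hg.of_nonneg_of_le hf hfg).tsum_le_tsum hfg hg

theorem stmt_19_general (μ : Measure ℝ)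
    (hint : ∀ n : ℕ, Integrable (fun x => x ^ n) μ)
    (s : ℕ → ℝ) (hs : ∀ n, s n = ∫ x, x ^ n ∂μ)
    (Pp : ℕ → Polynomial ℝ)
    (hdeg : ∀ n, (Pp n).natDegree = n)
    (hlead : ∀ n, 0 < (Pp n).leadingCoeff)
    (horth : ∀ m n, (∫ x, (Pp m).eval x * (Pp n).eval x ∂μ) = if m = n then 1 else 0)
    (c : ℕ → ℝ)
    (hc : ∀ n, c n = Real.sqrt (∑' m : ℕ, if n ≤ m then ((Pp m).coeff n) ^ 2 else 0))
    (hcfin : ∀ n, Summable (fun m : ℕ => if n ≤ m then ((Pp m).coeff n) ^ 2 else 0)) :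
    (∀ n : ℕ, 1 ≤ s (2 * n) * (Pp n).leadingCoeff ^ 2 ∧
      s (2 * n) * (Pp n).leadingCoeff ^ 2 ≤ (c n) ^ 2 * s (2 * n)) ∧
    (∀ r : ℝ, 0 ≤ r →
      ((∑' n : ℕ, ENNReal.ofReal (r ^ n / Real.sqrt (s (2 * n)))) ≤
          (∑' n : ℕ, ENNReal.ofReal ((Pp n).leadingCoeff * r ^ n)) ∧
        (∑' n : ℕ, ENNReal.ofReal ((Pp n).leadingCoeff * r ^ n)) ≤
          (∑' n : ℕ, ENNReal.ofReal (c n * r ^ n))) ∧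
      (Summable (fun n => c n * r ^ n) →
        (∑' n : ℕ, r ^ n / Real.sqrt (s (2 * n))) ≤
            (∑' n : ℕ, (Pp n).leadingCoeff * r ^ n) ∧
          (∑' n : ℕ, (Pp n).leadingCoeff * r ^ n) ≤ (∑' n : ℕ, c n * r ^ n))) := by
  let S : Sequence ℝ := ⟨Pp, fun n => by
    rw [degree_eq_natDegree (leadingCoeff_ne_zero.mp (hlead n).ne'), hdeg]⟩
  have hone : ∀ n, 1 ≤ s (2 * n) * (Pp n).leadingCoeff ^ 2 := fun n => by
    simpa only [← hs] using one_le_integral_pow_mul_leadingCoeff_sq (S := S) hint horth n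
  have hbc : ∀ n, (Pp n).leadingCoeff ≤ c n := fun n => by
    rw [hc, Real.le_sqrt' (hlead n), leadingCoeff, hdeg]
    simpa using (hcfin n).le_tsum n fun m _ => by split_ifs <;> positivity
  refine ⟨fun n => ⟨hone n, ?_⟩, fun r hr => ?_⟩
  · rw [mul_comm (c n ^ 2)]
    exact mul_le_mul_of_nonneg_left (pow_le_pow_left₀ (hlead n).le (hbc n) 2)
      (pos_of_mul_pos_left (one_pos.trans_le (hone n)) (sq_nonneg _)).le
  have h₁ : ∀ n, r ^ n / √(s (2 * n)) ≤ (Pp n).leadingCoeff * r ^ n := fun n => by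
    rw [div_eq_inv_mul]
    exact mul_le_mul_of_nonneg_right (inv_sqrt_le_of_one_le_mul_sq (hlead n).le (hone n))
      (pow_nonneg hr n)
  have h₂ : ∀ n, (Pp n).leadingCoeff * r ^ n ≤ c n * r ^ n := fun n =>
    mul_le_mul_of_nonneg_right (hbc n) (pow_nonneg hr n)
  refine ⟨⟨ENNReal.tsum_le_tsum fun n => ENNReal.ofReal_le_ofReal (h₁ n),
    ENNReal.tsum_le_tsum fun n => ENNReal.ofReal_le_ofReal (h₂ n)⟩, fun hsum => ?_⟩
  have hH : Summable fun n => (Pp n).leadingCoeff * r ^ n :=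
    hsum.of_nonneg_of_le (fun n => by have := hlead n; positivity) h₂
  exact ⟨tsum_le_tsum_of_nonneg (fun n => by positivity) h₁ hH,
    tsum_le_tsum_of_nonneg (fun n => by have := hlead n; positivity) h₂ hsum⟩

/-- Berg–Szwarc, Proposition 7.1: for the orthonormal polynomials of a probability measure
`μ` with infinite support and finite moments, with leading coefficients `b_{n,n}`,
moments `s_n`, and `c_n = (∑_{m=n}^∞ b_{n,m}²)^{1/2}`:
(i) `1 ≤ s_{2n}·b_{n,n}² ≤ c_n²·s_{2n}`;
(ii) for `r ≥ 0`, `∑ r^n/√(s_{2n}) ≤ ∑ b_{n,n} r^n ≤ ∑ c_n r^n` as sums in `[0,∞]`,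
and as real sums whenever the right-hand series converges, so the maximum moduli of the
entire functions `L`, `H`, `Φ` satisfy `M_L(r) ≤ M_H(r) ≤ M_Φ(r)`. -/
theorem stmt_19 (μ : Measure ℝ) [IsProbabilityMeasure μ]
    (hsupp : ∀ s : Finset ℝ, μ ((↑s : Set ℝ)ᶜ) ≠ 0)
    (hint : ∀ n : ℕ, Integrable (fun x => x ^ n) μ)
    (s : ℕ → ℝ) (hs : ∀ n, s n = ∫ x, x ^ n ∂μ)
    (Pp : ℕ → Polynomial ℝ)
    (hdeg : ∀ n, (Pp n).natDegree = n)
    (hlead : ∀ n, 0 < (Pp n).leadingCoeff)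
    (horth : ∀ m n, (∫ x, (Pp m).eval x * (Pp n).eval x ∂μ) = if m = n then 1 else 0)
    (c : ℕ → ℝ)
    (hc : ∀ n, c n = Real.sqrt (∑' m : ℕ, if n ≤ m then ((Pp m).coeff n) ^ 2 else 0))
    (hcfin : ∀ n, Summable (fun m : ℕ => if n ≤ m then ((Pp m).coeff n) ^ 2 else 0)) :
    (∀ n : ℕ, 1 ≤ s (2 * n) * (Pp n).leadingCoeff ^ 2 ∧
      s (2 * n) * (Pp n).leadingCoeff ^ 2 ≤ (c n) ^ 2 * s (2 * n)) ∧
    (∀ r : ℝ, 0 ≤ r →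
      ((∑' n : ℕ, ENNReal.ofReal (r ^ n / Real.sqrt (s (2 * n)))) ≤
          (∑' n : ℕ, ENNReal.ofReal ((Pp n).leadingCoeff * r ^ n)) ∧
        (∑' n : ℕ, ENNReal.ofReal ((Pp n).leadingCoeff * r ^ n)) ≤
          (∑' n : ℕ, ENNReal.ofReal (c n * r ^ n))) ∧
      (Summable (fun n => c n * r ^ n) →
        (∑' n : ℕ, r ^ n / Real.sqrt (s (2 * n))) ≤
            (∑' n : ℕ, (Pp n).leadingCoeff * r ^ n) ∧
          (∑' n : ℕ, (Pp n).leadingCoeff * r ^ n) ≤ (∑' n : ℕ, c n * r ^ n))) :=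
  stmt_19_general μ hint s hs Pp hdeg hlead horth c hc hcfin
end
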